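/- arXiv:0710.3451 — 11 statements merged into one kernel-verified Lean document; each statement's English description precedes it below -/
import Mathlib

section
/- Let F_q be a finite field of characteristic p, let n be a positive integer not divisible by p, let R = F_q[X]/(X^n − 1), and let Q_n = 1 + X + ⋯ + X^{n−1} ∈ F_q[X]. Suppose f ∈ R is such that the image of f in F_q[X]/(Q_n) is a unit. Then for every D ∈ F_q[X] divisible by X − 1 and all integers N, M ≥ 1: D^N·f ≡ D^M·f (mod X^n − 1) holds if and only if D^N·g ≡ D^M·g (mod X^n − 1) holds for every g ∈ R. -/
open Polynomial

/-!
Write `X ^ n - 1 = (X - 1) * Q_n`. Since `Q_n(1) = n` is a unit in `F`, the factors `X - 1` and `Q_n`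
are coprime. If `X ^ n - 1` divides `(D ^ N - D ^ M) * f`, then `Q_n` divides `D ^ N - D ^ M`
because `f` is invertible modulo `Q_n`, while `X - 1` divides it because it divides `D`; by
coprimality `X ^ n - 1` divides `D ^ N - D ^ M` itself, hence `(D ^ N - D ^ M) * g` for every `g`.
-/

theorem Ideal.Quotient.mk_span_singleton_eq_iff_dvd_sub {R : Type*} [CommRing R] {q a b : R} :
    Ideal.Quotient.mk (Ideal.span {q}) a = Ideal.Quotient.mk (Ideal.span {q}) b ↔ q ∣ a - b := by
  rw [Ideal.Quotient.mk_eq_mk_iff_sub_mem, Ideal.mem_span_singleton]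

theorem dvd_of_dvd_mul_of_isUnit_mk {R : Type*} [CommRing R] {q u f : R}
    (hf : IsUnit (Ideal.Quotient.mk (Ideal.span {q}) f)) (h : q ∣ u * f) : q ∣ u := by
  rw [← Ideal.mem_span_singleton, ← Ideal.Quotient.eq_zero_iff_mem] at h ⊢
  rwa [map_mul, hf.mul_left_eq_zero] at h

theorem IsCoprime.mul_dvd_of_dvd_mul_of_isUnit_mk {R : Type*} [CommRing R] {c q u f : R}
    (hcq : IsCoprime c q) (hc : c ∣ u) (hf : IsUnit (Ideal.Quotient.mk (Ideal.span {q}) f))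
    (h : c * q ∣ u * f) : c * q ∣ u :=
  hcq.mul_dvd hc (dvd_of_dvd_mul_of_isUnit_mk hf ((dvd_mul_left q c).trans h))

namespace Polynomial

theorem isCoprime_X_sub_C_of_isUnit_eval {R : Type*} [CommRing R] {a : R} {p : R[X]}
    (h : IsUnit (p.eval a)) : IsCoprime (X - C a) p := by
  rw [← modByMonic_add_div p (X - C a), IsCoprime.add_mul_left_right_iff,
    modByMonic_X_sub_C_eq_C_eval]
  simpa using (isCoprime_mul_unit_left_right (isUnit_C.mpr h) (X - C a) 1).mpr isCoprime_one_right

theorem isCoprime_X_sub_one_geom_sum {F : Type*} [Field F] {n : ℕ} (hn : (n : F) ≠ 0) :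
    IsCoprime (X - 1 : F[X]) (∑ i ∈ Finset.range n, X ^ i) := by
  rw [← C_1]
  exact isCoprime_X_sub_C_of_isUnit_eval (by rwa [eval_geom_sum, one_geom_sum, isUnit_iff_ne_zero])

end Polynomial

theorem stmt0_general {F : Type*} [Field F] (p n : ℕ) [CharP F p]
    (hpn : ¬ p ∣ n) (f : F[X])
    (hf : IsUnit (Ideal.Quotient.mk
      (Ideal.span {(∑ i ∈ Finset.range n, X ^ i : F[X])}) f)) :
    ∀ D : F[X], (X - 1 : F[X]) ∣ D → ∀ N M : ℕ, 1 ≤ N → 1 ≤ M →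
      ((Ideal.Quotient.mk (Ideal.span {(X ^ n - 1 : F[X])})) (D ^ N * f) =
        (Ideal.Quotient.mk (Ideal.span {(X ^ n - 1 : F[X])})) (D ^ M * f) ↔
      ∀ g : F[X],
        (Ideal.Quotient.mk (Ideal.span {(X ^ n - 1 : F[X])})) (D ^ N * g) =
        (Ideal.Quotient.mk (Ideal.span {(X ^ n - 1 : F[X])})) (D ^ M * g)) := by
  intro D hD N M hN hM
  simp only [Ideal.Quotient.mk_span_singleton_eq_iff_dvd_sub, ← sub_mul, ← mul_geom_sum]
  have hcop := isCoprime_X_sub_one_geom_sum ((CharP.cast_eq_zero_iff F p n).not.mpr hpn)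
  have hX : (X - 1 : F[X]) ∣ D ^ N - D ^ M :=
    dvd_sub (dvd_pow hD (by omega)) (dvd_pow hD (by omega))
  exact ⟨fun h g => dvd_mul_of_dvd_left (hcop.mul_dvd_of_dvd_mul_of_isUnit_mk hX hf h) g,
    fun h => h f⟩

/-- Lemma 1 (algebraic content): if `f` has unit image in `F_q[X]/(Q_n)`, then for every
differential operator `D` (divisible by `X - 1`) and all `N, M ≥ 1`, the congruence
`D^N f ≡ D^M f (mod X^n - 1)` holds iff it holds for every `g`. -/
theorem stmt0 {F : Type*} [Field F] [Fintype F] (p n : ℕ) [Fact p.Prime] [CharP F p]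
    (hn : 0 < n) (hpn : ¬ p ∣ n) (f : F[X])
    (hf : IsUnit (Ideal.Quotient.mk
      (Ideal.span {(∑ i ∈ Finset.range n, X ^ i : F[X])}) f)) :
    ∀ D : F[X], (X - 1 : F[X]) ∣ D → ∀ N M : ℕ, 1 ≤ N → 1 ≤ M →
      ((Ideal.Quotient.mk (Ideal.span {(X ^ n - 1 : F[X])})) (D ^ N * f) =
        (Ideal.Quotient.mk (Ideal.span {(X ^ n - 1 : F[X])})) (D ^ M * f) ↔
      ∀ g : F[X],
        (Ideal.Quotient.mk (Ideal.span {(X ^ n - 1 : F[X])})) (D ^ N * g) =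
        (Ideal.Quotient.mk (Ideal.span {(X ^ n - 1 : F[X])})) (D ^ M * g)) :=
  stmt0_general p n hpn f hf
end

section
/- Let F_q be a finite field of characteristic p, let n be a positive integer not divisible by p, let R = F_q[X]/(X^n − 1), and let Q_n = 1 + X + ⋯ + X^{n−1} ∈ F_q[X]. Suppose f ∈ R is such that the image of f in F_q[X]/(Q_n) is a unit. Then for every D ∈ F_q[X] divisible by X − 1 and all integers N, M ≥ 1: D^N·f ≡ D^M·f (mod X^n − 1) if and only if D^N ≡ D^M (mod Q_n). -/
open Polynomial

/-- If `f` has unit image in `F_q[X]/(Q_n)`, then for every differential operator `D`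
(divisible by `X - 1`) and all `N, M ≥ 1`:
`D^N f ≡ D^M f (mod X^n - 1)` iff `D^N ≡ D^M (mod Q_n)`. -/
theorem stmt1 {F : Type*} [Field F] [Fintype F] (p n : ℕ) [Fact p.Prime] [CharP F p]
    (hn : 0 < n) (hpn : ¬ p ∣ n) (f : F[X])
    (hf : IsUnit (Ideal.Quotient.mk
      (Ideal.span {(∑ i ∈ Finset.range n, X ^ i : F[X])}) f)) :
    ∀ D : F[X], (X - 1 : F[X]) ∣ D → ∀ N M : ℕ, 1 ≤ N → 1 ≤ M →
      ((Ideal.Quotient.mk (Ideal.span {(X ^ n - 1 : F[X])})) (D ^ N * f) =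
        (Ideal.Quotient.mk (Ideal.span {(X ^ n - 1 : F[X])})) (D ^ M * f) ↔
      (Ideal.Quotient.mk (Ideal.span {(∑ i ∈ Finset.range n, X ^ i : F[X])})) (D ^ N) =
        (Ideal.Quotient.mk (Ideal.span {(∑ i ∈ Finset.range n, X ^ i : F[X])})) (D ^ M)) := by
  intro D hD N M hN hM
  set Q : F[X] := ∑ i ∈ Finset.range n, X ^ i with hQ
  have hfact : (X ^ n - 1 : F[X]) = Q * (X - 1) := (geom_sum_mul X n).symm
  -- eval of Q at 1 is n
  have hQeval : Q.eval 1 = (n : F) := by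
    simp [hQ, eval_finset_sum]
  have hnne : (n : F) ≠ 0 := by
    rwa [Ne, CharP.cast_eq_zero_iff F p]
  -- X - 1 is coprime to Q
  have hprime : Prime (X - 1 : F[X]) := by
    simpa using prime_X_sub_C (1 : F)
  have hndvd : ¬ (X - 1 : F[X]) ∣ Q := by
    intro h
    have : Q.eval 1 = 0 := by
      have h' : (X - C (1:F)) ∣ Q := by simpa using h
      exact (dvd_iff_isRoot.mp h')
    rw [hQeval] at this
    exact hnne this
  have hcop : IsCoprime (X - 1 : F[X]) Q := hprime.coprime_iff_not_dvd.mpr hndvd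
  -- get inverse of f mod Q
  obtain ⟨u, hu⟩ := hf
  obtain ⟨g, hg⟩ := Ideal.Quotient.mk_surjective (I := Ideal.span {Q}) (u⁻¹ : _)
  have hfg : Q ∣ g * f - 1 := by
    rw [← Ideal.mem_span_singleton]
    have : (Ideal.Quotient.mk (Ideal.span {Q})) (g * f - 1) = 0 := by
      rw [map_sub, map_mul, hg, ← hu, map_one]
      simp
    rwa [← Ideal.Quotient.eq_zero_iff_mem]
  rw [Ideal.Quotient.eq, Ideal.Quotient.eq, Ideal.mem_span_singleton,
    Ideal.mem_span_singleton]
  constructor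
  · intro h
    have h1 : Q ∣ (D ^ N - D ^ M) * f := by
      have hQdvd : Q ∣ (X ^ n - 1 : F[X]) := ⟨X - 1, hfact⟩
      have : Q ∣ D ^ N * f - D ^ M * f := hQdvd.trans h
      rwa [sub_mul]
    have h2 : Q ∣ (D ^ N - D ^ M) * (f * g) := by
      have := h1.mul_right g
      rwa [mul_assoc] at this
    have hfg' : Q ∣ f * g - 1 := by rwa [mul_comm g f] at hfg
    have h3 : Q ∣ (D ^ N - D ^ M) * (f * g - 1) := hfg'.mul_left _
    have key : D ^ N - D ^ M =
        (D ^ N - D ^ M) * (f * g) - (D ^ N - D ^ M) * (f * g - 1) := by ring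
    rw [key]
    exact h2.sub h3
  · intro h
    have hx1 : (X - 1 : F[X]) ∣ D ^ N - D ^ M :=
      dvd_sub (hD.trans (dvd_pow_self D (by omega))) (hD.trans (dvd_pow_self D (by omega)))
    have : (X ^ n - 1 : F[X]) ∣ D ^ N - D ^ M := by
      rw [hfact, mul_comm]
      exact hcop.mul_dvd hx1 h
    have := this.mul_right f
    rwa [sub_mul] at this
end

section
/- Let F_q be a finite field of characteristic p, let n be a prime number different from p, and let d be the multiplicative order of q modulo n. Then the group of units of the quotient ring F_q[X]/(Q_n), where Q_n = 1 + X + ⋯ + X^{n−1}, has exactly (q^d − 1)^{(n−1)/d} elements. -/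
open Polynomial

private def myPiUnits {ι : Type*} {M : ι → Type*} [∀ i, Monoid (M i)] :
    (∀ i, M i)ˣ ≃* ∀ i, (M i)ˣ where
  toFun u i := Units.map (Pi.evalMonoidHom M i) u
  invFun u := ⟨fun i => (u i).val, fun i => (u i).inv,
    funext fun i => (u i).val_inv, funext fun i => (u i).inv_val⟩
  left_inv u := by ext; rfl
  right_inv u := by ext i; rfl
  map_mul' u v := rfl

section aux
variable {F : Type*} [Field F] [Fintype F]

private theorem factor_deg (p n d : ℕ) [Fact p.Prime] [CharP F p]
    (hn : n.Prime) (hnF : (n : F) ≠ 0)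
    (hd : 0 < d) (hdq : Fintype.card F ^ d ≡ 1 [MOD n])
    (hmin : ∀ e : ℕ, 0 < e → Fintype.card F ^ e ≡ 1 [MOD n] → d ≤ e)
    (f : F[X]) (hf : Irreducible f)
    (hfQ : f ∣ ∑ i ∈ Finset.range n, X ^ i) : f.natDegree = d := by
  classical
  haveI : Fact n.Prime := ⟨hn⟩
  set q := Fintype.card F with hq
  have hq1 : 1 < q := Fintype.one_lt_card
  haveI := Fact.mk hf
  set K := AdjoinRoot f with hK
  set α : K := AdjoinRoot.root f with hα
  have hf0 : f ≠ 0 := hf.ne_zero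
  set pb := AdjoinRoot.powerBasis hf0 with hpb
  haveI : Module.Finite F K := Module.Finite.of_basis pb.basis
  haveI : Finite K := Module.finite_of_finite F
  haveI : Fintype K := Fintype.ofFinite K
  set e := f.natDegree with he
  have he0 : 0 < e := hf.natDegree_pos
  have hcardK : Fintype.card K = q ^ e := by
    rw [Module.card_eq_pow_finrank (K := F) (V := K), pb.finrank, AdjoinRoot.powerBasis_dim]
  have hfX : f ∣ (X ^ n - 1 : F[X]) := hfQ.trans ⟨X - 1, (geom_sum_mul X n).symm⟩
  have hαn : α ^ n = 1 := by
    have h := AdjoinRoot.mk_eq_zero.mpr hfX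
    have : α ^ n - 1 = 0 := by
      simpa [hα, map_sub, map_pow, AdjoinRoot.mk_X] using h
    exact sub_eq_zero.mp this
  have hα1 : α ≠ 1 := by
    intro h1
    have h0 : aeval α (∑ i ∈ Finset.range n, (X : F[X]) ^ i) = 0 := by
      rw [AdjoinRoot.aeval_eq, AdjoinRoot.mk_eq_zero]; exact hfQ
    rw [h1] at h0
    simp only [map_sum, map_pow, aeval_X, one_pow, Finset.sum_const, Finset.card_range,
      nsmul_eq_mul, mul_one] at h0
    have : ((n : F) : K) = 0 := by exact_mod_cast h0
    exact hnF ((algebraMap F K).injective ((by simpa using this)))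
  have horder : orderOf α = n := orderOf_eq_prime hαn hα1
  have hα0 : α ≠ 0 := by
    intro h0
    rw [h0, zero_pow hn.ne_zero] at hαn
    exact zero_ne_one hαn
  have hdvd1 : n ∣ q ^ e - 1 := by
    have := FiniteField.pow_card_sub_one_eq_one α hα0
    have h := orderOf_dvd_of_pow_eq_one this
    rwa [horder, hcardK] at h
  have hde : d ≤ e := by
    refine hmin e he0 ?_
    have h1 : 1 ≤ q ^ e := Nat.one_le_pow _ _ (lt_trans one_pos hq1)
    exact ((Nat.modEq_iff_dvd' h1).mpr hdvd1).symm
  have hfix : α ^ q ^ d = α := by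
    have hdvd2 : n ∣ q ^ d - 1 :=
      (Nat.modEq_iff_dvd' (Nat.one_le_pow _ _ (lt_trans one_pos hq1))).mp hdq.symm
    have h1 : α ^ (q ^ d - 1) = 1 := by
      rw [← horder] at hdvd2
      exact orderOf_dvd_iff_pow_eq_one.mp hdvd2
    calc α ^ q ^ d = α ^ (q ^ d - 1 + 1) := by
          rw [Nat.sub_add_cancel (Nat.one_le_pow _ _ (lt_trans one_pos hq1))]
      _ = α ^ (q ^ d - 1) * α := by rw [pow_succ]
      _ = α := by rw [h1, one_mul]
  obtain ⟨m, hp', hqm⟩ := FiniteField.card F p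
  haveI : CharP K p := charP_of_injective_algebraMap (algebraMap F K).injective p
  haveI : ExpChar K p := ExpChar.prime hp'
  have hpow : p ^ ((m : ℕ) * d) = q ^ d := by rw [pow_mul, ← hqm]
  set φ : K →ₐ[F] K :=
    { toRingHom := iterateFrobenius K p ((m : ℕ) * d)
      commutes' := fun c => by
        show iterateFrobenius K p ((m : ℕ) * d) (algebraMap F K c) = algebraMap F K c
        rw [iterateFrobenius_def, hpow, ← map_pow, hq, FiniteField.pow_card_pow] } with hφ
  have hφeq : φ = AlgHom.id F K := by
    apply pb.algHom_ext
    show φ pb.gen = pb.gen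
    rw [AdjoinRoot.powerBasis_gen]
    show iterateFrobenius K p ((m : ℕ) * d) α = α
    rw [iterateFrobenius_def, hpow, hfix]
  have hall : ∀ x : K, x ^ q ^ d = x := by
    intro x
    have := congrArg (fun ψ : K →ₐ[F] K => ψ x) hφeq
    simpa [hφ, iterateFrobenius_def, hpow] using this
  have hcardle : Fintype.card K ≤ q ^ d := by
    set g : K[X] := X ^ q ^ d - X with hg
    have hg0 : g ≠ 0 := FiniteField.X_pow_card_pow_sub_X_ne_zero K hd.ne' hq1
    have hdeg : g.natDegree = q ^ d := FiniteField.X_pow_card_pow_sub_X_natDegree_eq K hd.ne' hq1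
    have hsub : (Finset.univ : Finset K) ⊆ g.roots.toFinset := by
      intro x _
      rw [Multiset.mem_toFinset, mem_roots hg0]
      simp [hg, IsRoot, hall x]
    calc Fintype.card K = (Finset.univ : Finset K).card := rfl
      _ ≤ g.roots.toFinset.card := Finset.card_le_card hsub
      _ ≤ Multiset.card g.roots := Multiset.toFinset_card_le _
      _ ≤ g.natDegree := g.card_roots'
      _ = q ^ d := hdeg
  have hed : e ≤ d := by
    rw [hcardK] at hcardle
    exact (Nat.pow_le_pow_iff_right hq1).mp hcardle
  exact le_antisymm hed hde

private theorem card_units_quot (d : ℕ) (f : F[X]) (hf : Irreducible f)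
    (hfd : f.natDegree = d) :
    Nat.card ((F[X] ⧸ Ideal.span {f})ˣ) = Fintype.card F ^ d - 1 := by
  classical
  haveI := Fact.mk hf
  show Nat.card (AdjoinRoot f)ˣ = _
  have hf0 : f ≠ 0 := hf.ne_zero
  set pb := AdjoinRoot.powerBasis hf0 with hpb
  haveI : Module.Finite F (AdjoinRoot f) := Module.Finite.of_basis pb.basis
  haveI : Finite (AdjoinRoot f) := Module.finite_of_finite F
  haveI : Fintype (AdjoinRoot f) := Fintype.ofFinite _
  have hcardK : Fintype.card (AdjoinRoot f) = Fintype.card F ^ d := by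
    rw [Module.card_eq_pow_finrank (K := F) (V := AdjoinRoot f), pb.finrank,
      AdjoinRoot.powerBasis_dim, hfd]
  rw [Nat.card_eq_fintype_card, Fintype.card_units, hcardK]

end aux

/-- For a prime `n ≠ p` and `d` the multiplicative order of `q` modulo `n`, the unit group
of `F_q[X]/(Q_n)` has exactly `(q^d - 1)^((n-1)/d)` elements. -/
theorem stmt3 {F : Type*} [Field F] [Fintype F] (p n d : ℕ) [Fact p.Prime] [CharP F p]
    (hn : n.Prime) (hnp : n ≠ p)
    (hd : 0 < d) (hdq : Fintype.card F ^ d ≡ 1 [MOD n])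
    (hmin : ∀ e : ℕ, 0 < e → Fintype.card F ^ e ≡ 1 [MOD n] → d ≤ e) :
    Nat.card ((F[X] ⧸ Ideal.span {(∑ i ∈ Finset.range n, X ^ i : F[X])})ˣ) =
      (Fintype.card F ^ d - 1) ^ ((n - 1) / d) := by
  classical
  haveI : Fact n.Prime := ⟨hn⟩
  set q := Fintype.card F with hq
  set Q : F[X] := ∑ i ∈ Finset.range n, X ^ i with hQdef
  have hQc : Q = cyclotomic n F := (cyclotomic_prime F n).symm
  have hQmonic : Q.Monic := by rw [hQc]; exact cyclotomic.monic n F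
  have hQ0 : Q ≠ 0 := hQmonic.ne_zero
  have hnF : (n : F) ≠ 0 := by
    rw [Ne, CharP.cast_eq_zero_iff F p n]
    intro h
    exact hnp ((Nat.prime_dvd_prime_iff_eq Fact.out hn).mp h).symm
  have hQsf : Squarefree Q := by
    have hsep : (X ^ n - 1 : F[X]).Separable := X_pow_sub_one_separable_iff.mpr hnF
    exact Squarefree.squarefree_of_dvd ⟨X - 1, (geom_sum_mul X n).symm⟩ hsep.squarefree
  set s := UniqueFactorizationMonoid.normalizedFactors Q with hs
  have hirr : ∀ f ∈ s, Irreducible f := fun f hf =>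
    UniqueFactorizationMonoid.irreducible_of_normalized_factor f hf
  have hmon : ∀ f ∈ s, Monic f := fun f hf => by
    have hnorm := UniqueFactorizationMonoid.normalize_normalized_factor f hf
    rw [← hnorm]; exact monic_normalize (hirr f hf).ne_zero
  have hnodup : s.Nodup :=
    (UniqueFactorizationMonoid.squarefree_iff_nodup_normalizedFactors hQ0).mp hQsf
  have hprod : s.prod = Q := by
    have hm : s.prod.Monic := by
      have := monic_multiset_prod_of_monic s id hmon
      rwa [Multiset.map_id] at this
    exact eq_of_monic_of_associated hm hQmonic
      (UniqueFactorizationMonoid.prod_normalizedFactors hQ0)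
  have hdegs : ∀ f ∈ s, f.natDegree = d := fun f hf =>
    factor_deg p n d hn hnF hd hdq hmin f (hirr f hf)
      (UniqueFactorizationMonoid.dvd_of_mem_normalizedFactors hf)
  have hQdeg : Q.natDegree = n - 1 := by
    rw [hQc, natDegree_cyclotomic, Nat.totient_prime hn]
  have hcards : Multiset.card s * d = n - 1 := by
    have h0 : (0 : F[X]) ∉ s := fun h => (hirr 0 h).ne_zero rfl
    have hnd := natDegree_multiset_prod s h0
    rw [hprod, hQdeg, Multiset.map_congr rfl hdegs, Multiset.map_const',
      Multiset.sum_replicate, smul_eq_mul] at hnd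
    omega
  have hscard : Multiset.card s = (n - 1) / d := by
    rw [← hcards, Nat.mul_div_cancel _ hd]
  set t := s.toFinset with ht
  have htcard : t.card = Multiset.card s := Multiset.toFinset_card_of_nodup hnodup
  have hcop : ∀ (i j : {x // x ∈ t}), i ≠ j → IsCoprime (i : F[X]) (j : F[X]) := by
    intro i j hij
    have hi : (i : F[X]) ∈ s := Multiset.mem_toFinset.mp i.2
    have hj : (j : F[X]) ∈ s := Multiset.mem_toFinset.mp j.2
    refine (hirr _ hi).coprime_iff_not_dvd.mpr ?_
    intro hdvd
    have hass := (hirr _ hi).associated_of_dvd (hirr _ hj) hdvd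
    exact hij (Subtype.ext (eq_of_monic_of_associated (hmon _ hi) (hmon _ hj) hass))
  have htval : t.val = s := by
    rw [ht, Multiset.toFinset_val, Multiset.dedup_eq_self.mpr hnodup]
  have hprodt : (∏ i : {x // x ∈ t}, (i : F[X])) = Q := by
    rw [← hprod, Finset.prod_coe_sort t (fun x => x), Finset.prod_eq_multiset_prod,
      Multiset.map_id', htval]
  have hinf : (⨅ i : {x // x ∈ t}, Ideal.span {(i : F[X])}) = Ideal.span {Q} := by
    rw [Ideal.iInf_span_singleton hcop, hprodt]
  let e1 : (F[X] ⧸ Ideal.span {Q}) ≃+* ∀ i : {x // x ∈ t}, F[X] ⧸ Ideal.span {(i : F[X])} :=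
    (Ideal.quotEquivOfEq hinf.symm).trans
      (Ideal.quotientInfRingEquivPiQuotient _ (fun i j hij =>
        (Ideal.isCoprime_span_singleton_iff _ _).mpr (hcop i j hij)))
  have hcongr :
      Nat.card ((F[X] ⧸ Ideal.span {Q})ˣ) =
        Nat.card (∀ i : {x // x ∈ t}, (F[X] ⧸ Ideal.span {(i : F[X])})ˣ) :=
    Nat.card_congr ((Units.mapEquiv e1.toMulEquiv).trans myPiUnits).toEquiv
  rw [hcongr, Nat.card_pi]
  have hfac : ∀ i : {x // x ∈ t},
      Nat.card ((F[X] ⧸ Ideal.span {(i : F[X])})ˣ) = q ^ d - 1 := fun i => by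
    have hi : (i : F[X]) ∈ s := Multiset.mem_toFinset.mp i.2
    exact card_units_quot d (i : F[X]) (hirr _ hi) (hdegs _ hi)
  rw [Finset.prod_congr rfl (fun i _ => hfac i), Finset.prod_const, Finset.card_univ,
    Fintype.card_coe, htcard, hscard]
end

section
/- Let F_q be a finite field of characteristic p, let n be a prime number different from p, and let d be the multiplicative order of q modulo n. Then the number of polynomials g ∈ F_q[X] of degree strictly less than n whose image in F_q[X]/(Q_n) is a unit equals q·(q^d − 1)^{(n−1)/d}; equivalently, the quota of such polynomials among all q^n polynomials of degree < n equals (1 − q^{−d})^{(n−1)/d}. -/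
/-!
Since `n` is prime, `Q_n` is the cyclotomic polynomial `Φ_n`, which is squarefree over `F_q` and
splits into `(n - 1) / d` distinct irreducible factors of degree `d`. By the Chinese remainder
theorem `F_q[X]/(Q_n)` is a product of `(n - 1) / d` copies of `F_{q^d}`, so it has
`(q^d - 1)^((n - 1) / d)` units. A polynomial of degree `< n` is determined by its residue
modulo `Q_n` (of degree `n - 1`) together with its coefficient of `X^(n-1)`, which is free;
this gives the extra factor `q`.
-/

open Polynomial UniqueFactorizationMonoid

section ChineseRemainder

variable {R : Type*} [CommRing R] [IsDomain R] [IsPrincipalIdealRing R] [NormalizationMonoid R]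
  [DecidableEq R]

theorem pairwise_isCoprime_normalizedFactors (a : R) :
    Pairwise fun P Q : (normalizedFactors a).toFinset => IsCoprime (P : R) Q := by
  rintro ⟨P, hP⟩ ⟨Q, hQ⟩ hPQ
  rw [Multiset.mem_toFinset] at hP hQ
  rw [(irreducible_of_normalized_factor P hP).coprime_iff_not_dvd]
  intro hdvd
  refine hPQ (Subtype.ext ?_)
  change P = Q
  rw [← normalize_normalized_factor P hP, ← normalize_normalized_factor Q hQ]
  exact normalize_eq_normalize hdvd ((irreducible_of_normalized_factor P hP).dvd_symm
    (irreducible_of_normalized_factor Q hQ) hdvd)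

theorem iInf_span_normalizedFactors {a : R} (ha : Squarefree a) :
    ⨅ P : (normalizedFactors a).toFinset, Ideal.span {(P : R)} = Ideal.span {a} := by
  have hprod : ∏ P : (normalizedFactors a).toFinset, (P : R) =
      ∏ P ∈ (normalizedFactors a).toFinset, P :=
    Finset.prod_coe_sort _ id
  rw [Ideal.iInf_span_singleton fun P Q h => pairwise_isCoprime_normalizedFactors a h,
    hprod, Finset.prod_eq_multiset_prod, Multiset.toFinset_val,
    ((squarefree_iff_nodup_normalizedFactors ha.ne_zero).mp ha).dedup, Multiset.map_id',
    Ideal.span_singleton_eq_span_singleton]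
  exact prod_normalizedFactors ha.ne_zero

noncomputable def quotientSpanEquivPiOfSquarefree {a : R} (ha : Squarefree a) :
    R ⧸ Ideal.span {a} ≃+* Π P : (normalizedFactors a).toFinset, R ⧸ Ideal.span {(P : R)} :=
  (Ideal.quotEquivOfEq (iInf_span_normalizedFactors ha).symm).trans
    (Ideal.quotientInfRingEquivPiQuotient _ fun _ _ h =>
      (Ideal.isCoprime_span_singleton_iff _ _).mpr (pairwise_isCoprime_normalizedFactors a h))

end ChineseRemainder

section FiniteField

variable {F : Type*} [Field F] [Fintype F]

theorem card_units_quotientSpan_of_irreducible {P : F[X]} (hP : Irreducible P) :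
    Nat.card (F[X] ⧸ Ideal.span {P})ˣ = Fintype.card F ^ P.natDegree - 1 := by
  have := Fact.mk hP
  have := (AdjoinRoot.powerBasis hP.ne_zero).finite
  have hcard : Nat.card (AdjoinRoot P) = Fintype.card F ^ P.natDegree := by
    rw [Module.natCard_eq_pow_finrank (K := F), (AdjoinRoot.powerBasis hP.ne_zero).finrank,
      AdjoinRoot.powerBasis_dim, Nat.card_eq_fintype_card]
  show Nat.card (AdjoinRoot P)ˣ = _
  rw [Nat.card_units, hcard]

theorem card_units_quotientSpan_of_squarefree [DecidableEq F] {Q : F[X]} (hQ : Squarefree Q) :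
    Nat.card (F[X] ⧸ Ideal.span {Q})ˣ =
      ∏ P ∈ (normalizedFactors Q).toFinset, (Fintype.card F ^ P.natDegree - 1) := by
  rw [Nat.card_congr ((Units.mapEquiv (quotientSpanEquivPiOfSquarefree hQ).toMulEquiv).trans
      MulEquiv.piUnits).toEquiv, Nat.card_pi,
    Finset.prod_coe_sort _ fun P => Nat.card (F[X] ⧸ Ideal.span {P})ˣ]
  exact Finset.prod_congr rfl fun P hP =>
    card_units_quotientSpan_of_irreducible (irreducible_of_normalized_factor _
      (Multiset.mem_toFinset.mp hP))

end FiniteField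

theorem degree_lt_of_degree_lt_succ_of_coeff_eq_zero {R : Type*} [Semiring R] {p : R[X]} {m : ℕ}
    (hp : p.degree < ↑(m + 1)) (hm : p.coeff m = 0) : p.degree < m := by
  rw [degree_lt_iff_coeff_zero] at hp ⊢
  intro k hk
  rcases hk.eq_or_lt with rfl | hk
  · exact hm
  · exact hp k hk

section DegreeLT

variable {R : Type*} [CommRing R] [IsDomain R] {Q : R[X]} {n : ℕ}

noncomputable def degreeLTEquivQuotientProd (hQ : Q.Monic)
    (hn : Q.natDegree + 1 = n) : {g : R[X] // g.degree < n} ≃ (R[X] ⧸ Ideal.span {Q}) × R := by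
  refine Equiv.ofBijective (fun g => (Ideal.Quotient.mk _ g.1, g.1.coeff Q.natDegree)) ⟨?_, ?_⟩
  · rintro ⟨g₁, hg₁⟩ ⟨g₂, hg₂⟩ h
    obtain ⟨hmk, hcoeff⟩ := Prod.mk.inj h
    have hdvd : Q ∣ g₁ - g₂ := Ideal.mem_span_singleton.mp (Ideal.Quotient.eq.mp hmk)
    have hdeg : (g₁ - g₂).degree < Q.degree := by
      rw [degree_eq_natDegree hQ.ne_zero]
      refine degree_lt_of_degree_lt_succ_of_coeff_eq_zero ?_ (by rw [coeff_sub, hcoeff, sub_self])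
      rw [hn]
      exact (degree_sub_le _ _).trans_lt (max_lt hg₁ hg₂)
    exact Subtype.ext (sub_eq_zero.mp (eq_zero_of_dvd_of_degree_lt hdvd hdeg))
  · rintro ⟨x, c⟩
    obtain ⟨g, rfl⟩ := Ideal.Quotient.mk_surjective x
    have hmod : (g %ₘ Q).degree < Q.natDegree :=
      (degree_modByMonic_lt g hQ).trans_eq (degree_eq_natDegree hQ.ne_zero)
    have hQn : Q.degree < n := by
      rw [degree_eq_natDegree hQ.ne_zero, ← hn]
      exact_mod_cast Q.natDegree.lt_succ_self
    refine ⟨⟨g %ₘ Q + C c * Q, ?_⟩, Prod.ext ?_ ?_⟩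
    · refine (degree_add_le _ _).trans_lt (max_lt ((degree_modByMonic_lt g hQ).trans hQn) ?_)
      calc (C c * Q).degree ≤ (C c).degree + Q.degree := degree_mul_le _ _
        _ ≤ 0 + Q.degree := by gcongr; exact degree_C_le
        _ < n := by rwa [zero_add]
    · refine Ideal.Quotient.eq.mpr (Ideal.mem_span_singleton.mpr ⟨C c - g /ₘ Q, ?_⟩)
      linear_combination modByMonic_add_div g Q
    · simp only [coeff_add, coeff_C_mul, coeff_eq_zero_of_degree_lt hmod, hQ.coeff_natDegree,
        zero_add, mul_one]

theorem card_degree_lt_isUnit_mk (hQ : Q.Monic) (hn : Q.natDegree + 1 = n) :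
    Nat.card {g : R[X] // g.degree < n ∧ IsUnit (Ideal.Quotient.mk (Ideal.span {Q}) g)} =
      Nat.card (R[X] ⧸ Ideal.span {Q})ˣ * Nat.card R :=
  calc _ = Nat.card {g : {g : R[X] // g.degree < n} // IsUnit (Ideal.Quotient.mk _ g.1)} :=
        Nat.card_congr (Equiv.subtypeSubtypeEquivSubtypeInter _ _).symm
    _ = Nat.card {x : (R[X] ⧸ Ideal.span {Q}) × R // IsUnit x.1} :=
        Nat.card_congr ((degreeLTEquivQuotientProd hQ hn).subtypeEquiv fun _ => Iff.rfl)
    _ = Nat.card (IsUnit.submonoid (R[X] ⧸ Ideal.span {Q}) × R) :=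
        Nat.card_congr Equiv.prodSubtypeFstEquivSubtypeProd
    _ = _ := by
      rw [Nat.card_prod, Nat.card_congr Submonoid.unitsTypeEquivIsUnitSubmonoid.toEquiv]

end DegreeLT

theorem orderOf_unitOfCoprime_eq {q n d : ℕ} (hqn : q.Coprime n) (hd : 0 < d)
    (hdq : q ^ d ≡ 1 [MOD n]) (hmin : ∀ e : ℕ, 0 < e → q ^ e ≡ 1 [MOD n] → d ≤ e) :
    orderOf (ZMod.unitOfCoprime q hqn) = d := by
  have hpow : ∀ e, ZMod.unitOfCoprime q hqn ^ e = 1 ↔ q ^ e ≡ 1 [MOD n] := fun e => by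
    rw [Units.ext_iff, Units.val_pow_eq_pow_val, ZMod.coe_unitOfCoprime, Units.val_one,
      ← Nat.cast_pow, ← Nat.cast_one, ZMod.natCast_eq_natCast_iff]
  rw [orderOf_eq_iff hd]
  exact ⟨(hpow d).mpr hdq, fun e he he0 h => (hmin e he0 ((hpow e).mp h)).not_gt he⟩

theorem card_units_quotientSpan_cyclotomic {F : Type*} [Field F] [Fintype F] {n : ℕ}
    (hqn : (Fintype.card F).Coprime n) :
    Nat.card (F[X] ⧸ Ideal.span {cyclotomic n F})ˣ =
      (Fintype.card F ^ orderOf (ZMod.unitOfCoprime _ hqn) - 1) ^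
        (n.totient / orderOf (ZMod.unitOfCoprime _ hqn)) := by
  classical
  obtain ⟨p, -, f, hp, hK⟩ := FiniteField.card' F
  have := Fact.mk hp
  have := charP_of_card_eq_prime_pow hK
  have hpn : p.Coprime n := Nat.Coprime.coprime_dvd_left (dvd_pow_self p f.ne_zero) (hK ▸ hqn)
  have : NeZero (n : F) := ⟨fun h => hp.ne_one <|
    hpn.eq_one_of_dvd ((CharP.cast_eq_zero_iff F p n).mp h)⟩
  have hu : ZMod.unitOfCoprime _ hqn = ZMod.unitOfCoprime _ (hpn.pow_left f) :=
    Units.ext (by simp [hK])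
  rw [card_units_quotientSpan_of_squarefree (squarefree_cyclotomic n F),
    Finset.prod_congr rfl fun P hP => by
      rw [natDegree_of_mem_normalizedFactors_cyclotomic hK hpn (Multiset.mem_toFinset.mp hP)],
    Finset.prod_const, normalizedFactors_cyclotomic_card hK hpn, hu]

theorem mul_pow_sub_one_pow_div_pow {K : Type*} [Field K] {q : K} (hq : q ≠ 0) (d k : ℕ) :
    q * (q ^ d - 1) ^ k / q ^ (d * k + 1) = (1 - q⁻¹ ^ d) ^ k := by
  have : 1 - q⁻¹ ^ d = (q ^ d - 1) / q ^ d := by rw [inv_pow]; field_simp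
  rw [this, div_pow, pow_succ, pow_mul]
  field_simp

theorem stmt4_general {F : Type*} [Field F] [Fintype F] (n d : ℕ)
    (hn : n.Prime)
    (hd : 0 < d) (hdq : Fintype.card F ^ d ≡ 1 [MOD n])
    (hmin : ∀ e : ℕ, 0 < e → Fintype.card F ^ e ≡ 1 [MOD n] → d ≤ e) :
    Nat.card {g : F[X] // g.degree < (n : WithBot ℕ) ∧
        IsUnit (Ideal.Quotient.mk
          (Ideal.span {(∑ i ∈ Finset.range n, X ^ i : F[X])}) g)} =
      Fintype.card F * (Fintype.card F ^ d - 1) ^ ((n - 1) / d) ∧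
    (Nat.card {g : F[X] // g.degree < (n : WithBot ℕ) ∧
        IsUnit (Ideal.Quotient.mk
          (Ideal.span {(∑ i ∈ Finset.range n, X ^ i : F[X])}) g)} : ℝ) /
        (Fintype.card F : ℝ) ^ n =
      (1 - ((Fintype.card F : ℝ))⁻¹ ^ d) ^ ((n - 1) / d) := by
  have := Fact.mk hn
  have hqn : (Fintype.card F).Coprime n :=
    (Nat.coprime_pow_left_iff hd _ _).mp (hdq.gcd_eq.trans (Nat.gcd_one_left n))
  have hord := orderOf_unitOfCoprime_eq hqn hd hdq hmin
  have htot : n.totient = n - 1 := Nat.totient_prime hn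
  have hcount : Nat.card {g : F[X] // g.degree < (n : WithBot ℕ) ∧
      IsUnit (Ideal.Quotient.mk (Ideal.span {(∑ i ∈ Finset.range n, X ^ i : F[X])}) g)} =
      Fintype.card F * (Fintype.card F ^ d - 1) ^ ((n - 1) / d) := by
    rw [← cyclotomic_prime F n, card_degree_lt_isUnit_mk (cyclotomic.monic n F)
      (by rw [natDegree_cyclotomic, htot]; exact Nat.sub_add_cancel hn.one_le),
      card_units_quotientSpan_cyclotomic hqn, hord, htot, Nat.card_eq_fintype_card, mul_comm]
  refine ⟨hcount, ?_⟩
  obtain ⟨k, hk⟩ : d ∣ n - 1 := by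
    rw [← hord, ← htot, ← ZMod.card_units_eq_totient]
    exact orderOf_dvd_card
  have hq : (Fintype.card F : ℝ) ≠ 0 := Nat.cast_ne_zero.mpr Fintype.card_ne_zero
  rw [hcount, hk, Nat.mul_div_cancel_left _ hd, show n = d * k + 1 by have := hn.pos; omega]
  push_cast [Nat.one_le_pow _ _ Fintype.card_pos]
  exact mul_pow_sub_one_pow_div_pow hq d k

/-- For a prime `n ≠ p` and `d` the multiplicative order of `q` modulo `n`, the number of
polynomials of degree `< n` with unit image in `F_q[X]/(Q_n)` equals
`q * (q^d - 1)^((n-1)/d)`; equivalently, their quota among all `q^n` polynomials of degree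
`< n` equals `(1 - q^(-d))^((n-1)/d)`. -/
theorem stmt4 {F : Type*} [Field F] [Fintype F] (p n d : ℕ) [Fact p.Prime] [CharP F p]
    (hn : n.Prime) (hnp : n ≠ p)
    (hd : 0 < d) (hdq : Fintype.card F ^ d ≡ 1 [MOD n])
    (hmin : ∀ e : ℕ, 0 < e → Fintype.card F ^ e ≡ 1 [MOD n] → d ≤ e) :
    Nat.card {g : F[X] // g.degree < (n : WithBot ℕ) ∧
        IsUnit (Ideal.Quotient.mk
          (Ideal.span {(∑ i ∈ Finset.range n, X ^ i : F[X])}) g)} =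
      Fintype.card F * (Fintype.card F ^ d - 1) ^ ((n - 1) / d) ∧
    (Nat.card {g : F[X] // g.degree < (n : WithBot ℕ) ∧
        IsUnit (Ideal.Quotient.mk
          (Ideal.span {(∑ i ∈ Finset.range n, X ^ i : F[X])}) g)} : ℝ) /
        (Fintype.card F : ℝ) ^ n =
      (1 - ((Fintype.card F : ℝ))⁻¹ ^ d) ^ ((n - 1) / d) :=
  stmt4_general n d hn hd hdq hmin
end

section
/- Let F_q be a finite field of characteristic p. For every real ε > 0 there exists N such that for every prime n > N with n ≠ p, the number of polynomials g ∈ F_q[X] of degree strictly less than n whose image in F_q[X]/(Q_n) is a unit is at least (1 − ε)·q^n. In other words, the quota of D-complicated sequences of prime length n tends to 1 as n → ∞. -/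
open Polynomial UniqueFactorizationMonoid

/-!
For a prime `n ≠ p`, `Q_n` is the cyclotomic polynomial `Φ_n`, whose monic irreducible factors
over `F_q` all have degree `d = ord_n q`; there are `(n - 1) / d` of them, and `n < q ^ d` because
`n ∣ q ^ d - 1`. A polynomial is a non-unit modulo `Q_n` iff one of these factors divides it, and
each factor divides exactly `q ^ (n - d)` polynomials of degree `< n`. Hence at most a
proportion `(n - 1) / (d q ^ d) < 1 / d` of them are non-units, and `d → ∞` as `n → ∞` since
`n < q ^ d`.
-/

theorem Ideal.Quotient.isUnit_mk_span_singleton_iff {R : Type*} [CommRing R] {Q g : R} :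
    IsUnit (Ideal.Quotient.mk (Ideal.span {Q}) g) ↔ IsCoprime g Q := by
  simp only [isUnit_iff_exists_inv, Ideal.Quotient.mk_surjective.exists, ← map_mul,
    ← map_one (Ideal.Quotient.mk _), Ideal.Quotient.eq, Ideal.mem_span_singleton', IsCoprime]
  constructor
  · rintro ⟨a, b, hb⟩
    exact ⟨a, -b, by linear_combination -hb⟩
  · rintro ⟨a, b, hab⟩
    exact ⟨a, -b, by linear_combination -hab⟩

theorem exists_mem_normalizedFactors_dvd_of_not_isCoprime {R : Type*} [CommRing R] [IsDomain R]
    [IsPrincipalIdealRing R] [NormalizationMonoid R] {Q g : R} (hQ : Q ≠ 0)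
    (h : ¬IsCoprime g Q) : ∃ P ∈ normalizedFactors Q, P ∣ g := by
  by_contra! hP
  refine h (isCoprime_of_irreducible_dvd (fun h0 => hQ h0.2) fun z hz hzg hzQ => ?_)
  obtain ⟨P, hPQ, hzP⟩ := exists_mem_normalizedFactors_of_dvd hQ hz hzQ
  exact hP P hPQ (hzP.symm.dvd.trans hzg)

theorem ZMod.lt_pow_orderOf_unitOfCoprime {q n : ℕ} (hq : 1 < q) (h : q.Coprime n) :
    n < q ^ orderOf (ZMod.unitOfCoprime q h) := by
  set d := orderOf (ZMod.unitOfCoprime q h)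
  have hd : ((q ^ d : ℕ) : ZMod n) = ((1 : ℕ) : ZMod n) := by
    rw [Nat.cast_pow, Nat.cast_one, ← ZMod.coe_unitOfCoprime q h, ← Units.val_pow_eq_pow_val,
      pow_orderOf_eq_one, Units.val_one]
  have hdvd : n ∣ q ^ d - 1 :=
    (Nat.modEq_iff_dvd' (Nat.one_le_pow _ _ (by omega))).1
      ((ZMod.natCast_eq_natCast_iff _ _ _).1 hd).symm
  have hlt : 1 < q ^ d := Nat.one_lt_pow (orderOf_pos _).ne' hq
  exact (Nat.le_of_dvd (by omega) hdvd).trans_lt (by omega)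

theorem one_sub_mul_le_cast_sub {ε : ℝ} (hε : 0 < ε) {k a s : ℕ} (hk : 1 / ε < k)
    (hks : k * s ≤ a) : (1 - ε) * a ≤ ((a - s : ℕ) : ℝ) := by
  have hk0 : 0 < k := Nat.cast_pos.1 ((one_div_pos.2 hε).trans hk)
  have hεk : 1 < ε * k := by rwa [div_lt_iff₀ hε, mul_comm] at hk
  have hks' : (k : ℝ) * s ≤ a := by exact_mod_cast hks
  rw [Nat.cast_sub ((Nat.le_mul_of_pos_left s hk0).trans hks)]
  nlinarith [(Nat.cast_nonneg s : (0 : ℝ) ≤ s)]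

namespace Polynomial

theorem natCard_degree_lt (R : Type*) [Ring R] [Fintype R] (m : ℕ) :
    Nat.card {g : R[X] // g.degree < m} = Fintype.card R ^ m := by
  rw [Nat.card_congr ((Equiv.subtypeEquivRight fun g => mem_degreeLT.symm).trans
    (degreeLTEquiv R m).toEquiv)]
  simp

variable {K : Type*} [Field K]

theorem degree_mul_lt_iff_degree_lt_sub {f h : K[X]} (hf : f ≠ 0) {m : ℕ}
    (hm : f.natDegree ≤ m) : (f * h).degree < m ↔ h.degree < (m - f.natDegree : ℕ) := by
  rcases eq_or_ne h 0 with rfl | hh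
  · simp
  rw [degree_eq_natDegree (mul_ne_zero hf hh), degree_eq_natDegree hh, natDegree_mul hf hh]
  norm_cast
  omega

variable [Fintype K]

theorem natCard_dvd_degree_lt {f : K[X]} (hf : f ≠ 0) {m : ℕ} (hm : f.natDegree ≤ m) :
    Nat.card {g : K[X] // g.degree < m ∧ f ∣ g} = Fintype.card K ^ (m - f.natDegree) := by
  rw [← natCard_degree_lt K]
  refine (Nat.card_eq_of_bijective (fun h => ⟨f * h,
    (degree_mul_lt_iff_degree_lt_sub hf hm).2 h.2, dvd_mul_right f h⟩) ⟨?_, ?_⟩).symm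
  · intro h₁ h₂ he
    exact Subtype.ext (mul_left_cancel₀ hf (congrArg Subtype.val he))
  · rintro ⟨_, hg, c, rfl⟩
    exact ⟨⟨c, (degree_mul_lt_iff_degree_lt_sub hf hm).1 hg⟩, rfl⟩

variable [DecidableEq K]

theorem card_pow_sub_sum_le_natCard_isUnit_mk {Q : K[X]} (hQ : Q ≠ 0) {m : ℕ}
    (hm : Q.natDegree ≤ m) :
    Fintype.card K ^ m -
        ∑ P ∈ (normalizedFactors Q).toFinset, Fintype.card K ^ (m - P.natDegree) ≤
      Nat.card {g : K[X] // g.degree < m ∧ IsUnit (Ideal.Quotient.mk (Ideal.span {Q}) g)} := by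
  set S := (normalizedFactors Q).toFinset
  set T : Set K[X] := {g | g.degree < m}
  set B : K[X] → Set K[X] := fun P => {g | g.degree < m ∧ P ∣ g}
  have hT : T.Finite := Nat.finite_of_card_ne_zero
    ((natCard_degree_lt K m).trans_ne (pow_ne_zero _ Fintype.card_ne_zero))
  have hB : ∀ P ∈ S, (B P).ncard = Fintype.card K ^ (m - P.natDegree) := fun P hP => by
    rw [Multiset.mem_toFinset] at hP
    exact natCard_dvd_degree_lt (ne_zero_of_mem_normalizedFactors hP)
      ((natDegree_le_of_dvd (dvd_of_mem_normalizedFactors hP) hQ).trans hm)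
  have hcover : T \ ⋃ P ∈ S, B P ⊆
      {g | g.degree < m ∧ IsUnit (Ideal.Quotient.mk (Ideal.span {Q}) g)} := by
    rintro g ⟨hg, hgB⟩
    refine ⟨hg, Ideal.Quotient.isUnit_mk_span_singleton_iff.2 (by_contra fun h => ?_)⟩
    obtain ⟨P, hP, hPg⟩ := exists_mem_normalizedFactors_dvd_of_not_isCoprime hQ h
    exact hgB (Set.mem_biUnion (Multiset.mem_toFinset.2 hP) ⟨hg, hPg⟩)
  calc _ = T.ncard - ∑ P ∈ S, (B P).ncard := by
        rw [Finset.sum_congr rfl hB, ← natCard_degree_lt K m]; rfl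
    _ ≤ T.ncard - (⋃ P ∈ S, B P).ncard := Nat.sub_le_sub_left (S.set_ncard_biUnion_le B) _
    _ ≤ (T \ ⋃ P ∈ S, B P).ncard :=
        Set.le_ncard_sdiff _ _ (hT.subset (Set.iUnion₂_subset fun _ _ _ hg => hg.1))
    _ ≤ _ := Set.ncard_le_ncard hcover (hT.subset fun _ hg => hg.1)

theorem orderOf_mul_sum_normalizedFactors_cyclotomic_le {p f n : ℕ} [Fact p.Prime]
    (hK : Fintype.card K = p ^ f) (hn : p.Coprime n) {m : ℕ} (hm : n.totient ≤ m) :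
    orderOf (ZMod.unitOfCoprime _ (hn.pow_left f)) *
        ∑ P ∈ (normalizedFactors (cyclotomic n K)).toFinset,
          Fintype.card K ^ (m - P.natDegree) ≤
      Fintype.card K ^ m := by
  set d := orderOf (ZMod.unitOfCoprime _ (hn.pow_left f))
  set q := Fintype.card K
  have : NeZero n := ⟨by rintro rfl; exact (Fact.out : p.Prime).one_lt.ne' (by simpa using hn)⟩
  have hdm : d ≤ m := orderOf_le_card.trans
    (by rw [Nat.card_eq_fintype_card, ZMod.card_units_eq_totient]; exact hm)
  have hnq : n < q ^ d := hK ▸ ZMod.lt_pow_orderOf_unitOfCoprime (hK ▸ Fintype.one_lt_card) _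
  rw [Finset.sum_congr rfl fun P hP => by
      rw [natDegree_of_mem_normalizedFactors_cyclotomic hK hn (Multiset.mem_toFinset.1 hP)],
    Finset.sum_const, normalizedFactors_cyclotomic_card hK hn, smul_eq_mul, ← mul_assoc]
  calc d * (n.totient / d) * q ^ (m - d) ≤ q ^ d * q ^ (m - d) := by
        gcongr
        exact (Nat.mul_div_le _ _).trans ((Nat.totient_le n).trans hnq.le)
    _ = q ^ m := by rw [← pow_add, Nat.add_sub_cancel' hdm]

end Polynomial

/-- Theorem 1: the quota of `D`-complicated sequences of prime length `n` tends to `1` as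
`n → ∞`: for every `ε > 0` there is `N` such that for every prime `n > N` with `n ≠ p`,
at least `(1 - ε) q^n` of the polynomials of degree `< n` have unit image in
`F_q[X]/(Q_n)`. -/
theorem stmt5 {F : Type*} [Field F] [Fintype F] (p : ℕ) [Fact p.Prime] [CharP F p] :
    ∀ ε : ℝ, 0 < ε → ∃ N : ℕ, ∀ n : ℕ, n.Prime → N < n → n ≠ p →
      (1 - ε) * (Fintype.card F : ℝ) ^ n ≤
        (Nat.card {g : F[X] // g.degree < (n : WithBot ℕ) ∧
          IsUnit (Ideal.Quotient.mk
            (Ideal.span {(∑ i ∈ Finset.range n, X ^ i : F[X])}) g)} : ℝ) := by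
  classical
  intro ε hε
  obtain ⟨f, -, hK⟩ := FiniteField.card F p
  have hq : 1 < Fintype.card F := Fintype.one_lt_card
  obtain ⟨k, hk⟩ := exists_nat_gt (1 / ε)
  refine ⟨Fintype.card F ^ k, fun n hn hkn hnp => ?_⟩
  have : Fact n.Prime := ⟨hn⟩
  have hpn : p.Coprime n := (Nat.coprime_primes Fact.out hn).2 hnp.symm
  have hkd : k < orderOf (ZMod.unitOfCoprime _ (hpn.pow_left f)) :=
    (Nat.pow_lt_pow_iff_right hq).1 (hkn.trans
      ((ZMod.lt_pow_orderOf_unitOfCoprime (hK ▸ hq) _).trans_eq (by rw [hK])))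
  have hds := orderOf_mul_sum_normalizedFactors_cyclotomic_le hK hpn (Nat.totient_le n)
  have hunits := card_pow_sub_sum_le_natCard_isUnit_mk (cyclotomic_ne_zero n F)
    ((natDegree_cyclotomic n F).trans_le (Nat.totient_le n))
  rw [cyclotomic_prime] at hds hunits
  rw [← Nat.cast_pow]
  exact (one_sub_mul_le_cast_sub hε hk ((Nat.mul_le_mul_right _ hkd.le).trans hds)).trans
    (Nat.cast_le.2 hunits)
end

section
/- Let F_q be a finite field of characteristic p, let n be an odd prime different from p, and let k* be the integer nearest to n/4 (that is, k* = k if n = 4k + 1 and k* = k + 1 if n = 4k + 3). If p does not divide k*, then the polynomial F(X) = Σ_{i ∈ NR(n)} X^i, where NR(n) ⊆ {1, …, n−1} is the set of quadratic nonresidues modulo n, has unit image in F_q[X]/(Q_n). -/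
open Polynomial
open scoped Classical

/-!
Let `ψ a = X ^ a` in `F[X]/(Q_n)`, an additive character of `ZMod n` whose values sum to zero, and
let `η₊ = quadraticPeriod ψ 1`, `η₋ = quadraticPeriod ψ (-1)` be the sums of `ψ` over the nonzero
squares and over the nonsquares. Then `1 + η₊ + η₋ = 0`, and `η₊ η₋ = ∑ₜ N(t) ψ(t)`, where
`N = sqAddNonsqCount` counts the ways of writing `t` as a nonzero square plus a nonsquare. `N` is invariant under multiplication by units (a nonsquare
multiplier exchanges the roles of the two summands), so `η₊ η₋ = N(0) - N(1)`. The same two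
identities for the trivial character count `N(0) + (n - 1) N(1) = ((n - 1) / 2)²`, which gives
`N(1) - N(0) = ±k`. Hence `η₋ (η₋ + 1) = ±k`, a unit when `p ∤ k`.
-/

open Finset

section QuadraticPeriods

variable {K : Type*} [Field K] [Fintype K] [DecidableEq K]

lemma quadraticChar_inv (a : K) : quadraticChar K a⁻¹ = quadraticChar K a := by
  rw [← MulChar.inv_apply', (quadraticChar_isQuadratic K).inv]

def sqAddNonsqCount (t : K) : ℕ :=
  #{a | quadraticChar K a = 1 ∧ quadraticChar K (t - a) = -1}

lemma sqAddNonsqCount_mul {u : K} (hu : u ≠ 0) (t : K) :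
    sqAddNonsqCount (u * t) = sqAddNonsqCount t := by
  unfold sqAddNonsqCount
  symm
  rcases quadraticChar_dichotomy hu with hχu | hχu
  · apply card_nbij' (u * ·) (u⁻¹ * ·)
    · intro a ha
      simp only [coe_filter, mem_univ, true_and, Set.mem_ofPred_eq] at ha ⊢
      rw [← mul_sub, map_mul, map_mul, hχu, one_mul, one_mul]
      exact ha
    · intro b hb
      simp only [coe_filter, mem_univ, true_and, Set.mem_ofPred_eq] at hb ⊢
      rw [show t - u⁻¹ * b = u⁻¹ * (u * t - b) by field_simp, map_mul, map_mul,
        quadraticChar_inv, hχu, one_mul, one_mul]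
      exact hb
    · intro a _; simp [hu]
    · intro b _; simp [hu]
  · apply card_nbij' (fun a => u * (t - a)) (fun b => t - u⁻¹ * b)
    · intro a ha
      simp only [coe_filter, mem_univ, true_and, Set.mem_ofPred_eq] at ha ⊢
      rw [show u * t - u * (t - a) = u * a by ring, map_mul, map_mul, hχu, ha.1, ha.2]
      norm_num
    · intro b hb
      simp only [coe_filter, mem_univ, true_and, Set.mem_ofPred_eq] at hb ⊢
      rw [show t - (t - u⁻¹ * b) = u⁻¹ * b by ring,
        show t - u⁻¹ * b = u⁻¹ * (u * t - b) by field_simp, map_mul, map_mul,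
        quadraticChar_inv, hχu, hb.1, hb.2]
      norm_num
    · intro a _; simp [hu]
    · intro b _; simp [hu]

lemma sqAddNonsqCount_of_ne_zero {t : K} (ht : t ≠ 0) :
    sqAddNonsqCount t = sqAddNonsqCount (1 : K) := by
  simpa using sqAddNonsqCount_mul ht 1

lemma sqAddNonsqCount_zero :
    sqAddNonsqCount (0 : K) =
      if quadraticChar K (-1) = 1 then 0 else #{a | quadraticChar K a = 1} := by
  unfold sqAddNonsqCount
  have hneg : ∀ a : K, quadraticChar K (0 - a) = quadraticChar K (-1) * quadraticChar K a := by
    intro a; rw [zero_sub, neg_eq_neg_one_mul, map_mul]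
  simp only [hneg]
  rcases quadraticChar_dichotomy (neg_ne_zero.mpr (one_ne_zero' K)) with h | h
  · simp +contextual [h]
  · simp [h]

lemma card_quadraticChar_eq_neg_one (hK : ringChar K ≠ 2) :
    #{a : K | quadraticChar K a = -1} = #{a : K | quadraticChar K a = 1} := by
  obtain ⟨ν, hν⟩ := quadraticChar_exists_neg_one hK
  have hν0 : ν ≠ 0 := by rintro rfl; simp at hν
  apply card_nbij' (ν * ·) (ν⁻¹ * ·)
  · intro a ha
    simp only [coe_filter, mem_univ, true_and, Set.mem_ofPred_eq] at ha ⊢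
    rw [map_mul, hν, ha]; norm_num
  · intro b hb
    simp only [coe_filter, mem_univ, true_and, Set.mem_ofPred_eq] at hb ⊢
    rw [map_mul, quadraticChar_inv, hν, hb]; norm_num
  · intro a _; simp [hν0]
  · intro b _; simp [hν0]

section Periods

variable {R : Type*} [CommSemiring R]

def quadraticPeriod (ψ : AddChar K R) (u : ℤ) : R :=
  ∑ a ∈ {a | quadraticChar K a = u}, ψ a

lemma one_add_quadraticPeriod_add (ψ : AddChar K R) :
    1 + quadraticPeriod ψ 1 + quadraticPeriod ψ (-1) = ∑ a, ψ a := by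
  have hvals : ∀ a ∈ (univ : Finset K), quadraticChar K a ∈ ({0, 1, -1} : Finset ℤ) := by
    intro a _
    rcases eq_or_ne a 0 with rfl | ha
    · simp
    · rcases quadraticChar_dichotomy ha with h | h <;> simp [h]
  have hzero : ({a | quadraticChar K a = 0} : Finset K) = {0} := by
    ext a; simp only [mem_filter, mem_univ, true_and, mem_singleton, quadraticChar_eq_zero_iff]
  rw [← sum_fiberwise_of_maps_to hvals, sum_insert (by decide), sum_insert (by decide),
    sum_singleton, hzero, sum_singleton, AddChar.map_zero_eq_one, add_assoc]
  rfl

lemma quadraticPeriod_one_mul_neg_one (ψ : AddChar K R) :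
    quadraticPeriod ψ 1 * quadraticPeriod ψ (-1) = ∑ t, sqAddNonsqCount t • ψ t := by
  simp only [quadraticPeriod, sqAddNonsqCount, card_eq_sum_ones, sum_smul, sum_filter,
    sum_mul_sum]
  symm
  rw [sum_comm]
  refine sum_congr rfl fun a _ => ?_
  refine (Fintype.sum_equiv (Equiv.addLeft a) _ _ fun b => ?_).symm
  simp only [Equiv.coe_addLeft, add_sub_cancel_left, AddChar.map_add_eq_mul, ite_mul, zero_mul,
    mul_ite, mul_zero, ite_smul, one_smul, zero_smul, ite_and]
  split_ifs <;> rfl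

lemma sum_sqAddNonsqCount_smul (ψ : AddChar K R) :
    ∑ t, sqAddNonsqCount t • ψ t =
      sqAddNonsqCount (0 : K) + sqAddNonsqCount (1 : K) • ∑ t ∈ univ.erase 0, ψ t := by
  rw [← add_sum_erase _ _ (mem_univ 0), AddChar.map_zero_eq_one, nsmul_one, smul_sum]
  congr 1
  exact sum_congr rfl fun t ht => by rw [sqAddNonsqCount_of_ne_zero (ne_of_mem_erase ht)]

lemma quadraticPeriod_one (u : ℤ) :
    quadraticPeriod (1 : AddChar K ℕ) u = #{a : K | quadraticChar K a = u} := by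
  simp [quadraticPeriod]

lemma one_add_two_mul_card_quadraticChar_eq_one (hK : ringChar K ≠ 2) :
    1 + 2 * #{a : K | quadraticChar K a = 1} = Fintype.card K := by
  have h := one_add_quadraticPeriod_add (1 : AddChar K ℕ)
  rw [quadraticPeriod_one, quadraticPeriod_one, card_quadraticChar_eq_neg_one hK] at h
  simpa [two_mul, add_assoc] using h

lemma card_quadraticChar_eq_one_sq (hK : ringChar K ≠ 2) :
    #{a : K | quadraticChar K a = 1} ^ 2 =
      sqAddNonsqCount (0 : K) + sqAddNonsqCount (1 : K) * (Fintype.card K - 1) := by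
  have h := quadraticPeriod_one_mul_neg_one (1 : AddChar K ℕ)
  rw [quadraticPeriod_one, quadraticPeriod_one, card_quadraticChar_eq_neg_one hK,
    sum_sqAddNonsqCount_smul] at h
  simpa [sq, card_erase_of_mem] using h

lemma four_mul_sqAddNonsqCount_one_sub_zero (hK : ringChar K ≠ 2) :
    4 * ((sqAddNonsqCount (1 : K) : ℤ) - sqAddNonsqCount (0 : K)) =
      quadraticChar K (-1) * Fintype.card K - 1 := by
  have hcard := one_add_two_mul_card_quadraticChar_eq_one hK
  have hsq := card_quadraticChar_eq_one_sq hK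
  set m := #{a : K | quadraticChar K a = 1}
  set c := sqAddNonsqCount (1 : K)
  have hm : 0 < m := card_pos.mpr ⟨1, by simp⟩
  rw [← hcard, show 1 + 2 * m - 1 = m * 2 by omega, sqAddNonsqCount_zero] at hsq
  rw [← hcard, sqAddNonsqCount_zero]
  rcases quadraticChar_dichotomy (neg_ne_zero.mpr (one_ne_zero' K)) with h | h
  · rw [if_pos h] at hsq ⊢
    have : m = c * 2 := Nat.eq_of_mul_eq_mul_left hm (by rw [← sq, hsq]; ring)
    rw [h]; push_cast; omega
  · rw [if_neg (by rw [h]; decide)] at hsq ⊢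
    have : m = 1 + c * 2 := Nat.eq_of_mul_eq_mul_left hm (by rw [← sq, hsq]; ring)
    rw [h]; push_cast; omega

end Periods

lemma quadraticPeriod_neg_one_mul_add_one {R : Type*} [CommRing R] (hK : ringChar K ≠ 2)
    (ψ : AddChar K R) (hψ : ∑ a, ψ a = 0) {k : ℤ}
    (hk : 4 * k = quadraticChar K (-1) * Fintype.card K - 1) :
    quadraticPeriod ψ (-1) * (quadraticPeriod ψ (-1) + 1) = k := by
  have hsum := one_add_quadraticPeriod_add ψ
  have hprod := quadraticPeriod_one_mul_neg_one ψ
  have herase : ∑ t ∈ univ.erase 0, ψ t = -1 := by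
    rw [sum_erase_eq_sub (mem_univ 0), hψ, AddChar.map_zero_eq_one, zero_sub]
  rw [sum_sqAddNonsqCount_smul, herase, smul_neg, nsmul_one] at hprod
  rw [hψ] at hsum
  have hk' : k = (sqAddNonsqCount (1 : K) : ℤ) - sqAddNonsqCount (0 : K) := by
    linarith [four_mul_sqAddNonsqCount_one_sub_zero hK]
  rw [hk']
  push_cast
  linear_combination quadraticPeriod ψ (-1) * hsum - hprod

lemma isUnit_quadraticPeriod_neg_one {R : Type*} [CommRing R] (hK : ringChar K ≠ 2)
    (ψ : AddChar K R) (hψ : ∑ a, ψ a = 0) {k : ℤ}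
    (hk : 4 * k = quadraticChar K (-1) * Fintype.card K - 1) (hkR : IsUnit (k : R)) :
    IsUnit (quadraticPeriod ψ (-1)) :=
  isUnit_of_mul_isUnit_left (quadraticPeriod_neg_one_mul_add_one hK ψ hψ hk ▸ hkR)

end QuadraticPeriods

section RootOfUnity

variable {R : Type*} [CommRing R] {n : ℕ} {ζ : R}

lemma pow_eq_one_of_geom_sum_eq_zero (h : ∑ i ∈ range n, ζ ^ i = 0) : ζ ^ n = 1 := by
  rw [← sub_eq_zero, ← mul_geom_sum, h, mul_zero]

lemma sum_zmodChar [NeZero n] (hζ : ζ ^ n = 1) :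
    ∑ a, AddChar.zmodChar n hζ a = ∑ i ∈ range n, ζ ^ i :=
  sum_nbij' ZMod.val (fun i => (i : ZMod n)) (fun a _ => mem_range.mpr a.val_lt)
    (fun _ _ => mem_univ _) (fun a _ => ZMod.natCast_zmod_val a)
    (fun _ hi => ZMod.val_cast_of_lt (mem_range.mp hi)) (fun _ _ => rfl)

lemma sum_filter_not_isSquare_pow [Fact n.Prime] (hζ : ζ ^ n = 1) :
    ∑ i ∈ (Ico 1 n).filter (fun i : ℕ => ¬IsSquare (i : ZMod n)), ζ ^ i =
      quadraticPeriod (AddChar.zmodChar n hζ) (-1) := by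
  symm
  refine sum_nbij' ZMod.val (fun i => (i : ZMod n)) ?_ ?_ (fun a _ => ZMod.natCast_zmod_val a)
    ?_ (fun _ _ => rfl)
  · intro a ha
    simp only [mem_filter, mem_univ, true_and, mem_Ico] at ha ⊢
    have ha0 : a ≠ 0 := by rintro rfl; simp at ha
    rw [ZMod.natCast_zmod_val, ← quadraticChar_neg_one_iff_not_isSquare]
    exact ⟨⟨Nat.one_le_iff_ne_zero.mpr ((ZMod.val_ne_zero a).mpr ha0), a.val_lt⟩, ha⟩
  · intro i hi
    simp only [mem_filter, mem_univ, true_and, mem_Ico] at hi ⊢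
    exact quadraticChar_neg_one_iff_not_isSquare.mpr hi.2
  · intro i hi
    simp only [mem_filter, mem_Ico] at hi
    exact ZMod.val_cast_of_lt hi.1.2

end RootOfUnity

theorem stmt7_general {F : Type*} [Field F] (p n k : ℕ) [CharP F p]
    (hn : n.Prime) (hn2 : n ≠ 2)
    (hk : (n % 4 = 1 ∧ k = n / 4) ∨ (n % 4 = 3 ∧ k = n / 4 + 1))
    (hpk : ¬ p ∣ k) :
    IsUnit (Ideal.Quotient.mk
      (Ideal.span {(∑ i ∈ Finset.range n, X ^ i : F[X])})
      (∑ i ∈ (Finset.Ico 1 n).filter (fun i : ℕ => ¬ IsSquare ((i : ZMod n))), X ^ i)) := by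
  have := Fact.mk hn
  set π := Ideal.Quotient.mk (Ideal.span {(∑ i ∈ Finset.range n, X ^ i : F[X])})
  have hQ : ∑ i ∈ range n, π X ^ i = 0 := by
    simpa [map_sum] using Ideal.Quotient.eq_zero_iff_mem.mpr
      (Ideal.mem_span_singleton_self (∑ i ∈ range n, X ^ i : F[X]))
  have hxn := pow_eq_one_of_geom_sum_eq_zero hQ
  have hψ : ∑ a, AddChar.zmodChar n hxn a = 0 := (sum_zmodChar hxn).trans hQ
  have hK : ringChar (ZMod n) ≠ 2 := by rwa [ZMod.ringChar_zmod_n]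
  have hkF : (k : F) ≠ 0 := fun h => hpk ((CharP.cast_eq_zero_iff F p k).mp h)
  have hkunit := (isUnit_iff_ne_zero.mpr hkF).map (π.comp C)
  rw [map_natCast] at hkunit
  simp only [map_sum, map_pow]
  -- the filter in the statement was elaborated with the classical decidability instance
  rw [filter_congr_decidable, sum_filter_not_isSquare_pow hxn]
  rcases hk with ⟨h4, rfl⟩ | ⟨h4, rfl⟩
  · refine isUnit_quadraticPeriod_neg_one hK _ hψ (k := (n / 4 : ℕ)) ?_
      (by rwa [Int.cast_natCast])
    rw [quadraticChar_neg_one hK, ZMod.card, ZMod.χ₄_nat_one_mod_four h4]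
    omega
  · refine isUnit_quadraticPeriod_neg_one hK _ hψ (k := -((n / 4 + 1 : ℕ) : ℤ)) ?_
      (by rw [Int.cast_neg, Int.cast_natCast]; exact hkunit.neg)
    rw [quadraticChar_neg_one hK, ZMod.card, ZMod.χ₄_nat_three_mod_four h4]
    omega

/-- Theorem 2: for an odd prime `n ≠ p`, if `p` does not divide the integer `k*` nearest
to `n/4`, then the quadratic-nonresidue indicator polynomial `∑_{i ∈ NR(n)} X^i` has unit
image in `F_q[X]/(Q_n)`. -/
theorem stmt7 {F : Type*} [Field F] [Fintype F] (p n k : ℕ) [Fact p.Prime] [CharP F p]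
    (hn : n.Prime) (hn2 : n ≠ 2) (hnp : n ≠ p)
    (hk : (n % 4 = 1 ∧ k = n / 4) ∨ (n % 4 = 3 ∧ k = n / 4 + 1))
    (hpk : ¬ p ∣ k) :
    IsUnit (Ideal.Quotient.mk
      (Ideal.span {(∑ i ∈ Finset.range n, X ^ i : F[X])})
      (∑ i ∈ (Finset.Ico 1 n).filter (fun i : ℕ => ¬ IsSquare ((i : ZMod n))), X ^ i)) :=
  stmt7_general p n k hn hn2 hk hpk
end

section
/- Let F_q be a finite field of characteristic p, let n be an odd prime different from p, let K be a field extension of F_q containing a primitive n-th root of unity ζ, and let k* be the integer nearest to n/4 (that is, k* = k if n = 4k + 1 and k* = k + 1 if n = 4k + 3). Then ∏_{m=1}^{n−1} ( Σ_{i ∈ NR(n)} ζ^{i·m} ) = (k*)^{(n−1)/2}, where k* on the right-hand side is interpreted via the natural-number cast into K. -/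
/-!
Write `χ` for the quadratic character of `ZMod n`, `ψ t = ζ ^ t`, and `η e` for the Gaussian
period `∑_{χ t = e} ψ t`. Substituting `t ↦ t * m` shows that the eigenvalue at `m` is
`η (-χ m)`, so the product is `(η 1 * η (-1)) ^ ((n - 1) / 2)`. Now `η 1 + η (-1) = -1`, and
`η 1 - η (-1)` is the quadratic Gauss sum, whose square is `χ (-1) * n`; hence
`4 * η 1 * η (-1) = 1 - χ (-1) * n`, which is `-4k` or `4k` according to `n % 4`.

Dividing by `4` needs `ringChar K ≠ 2`. The general case follows from the complex one: the
cyclotomic polynomial `Φ_n` is the minimal polynomial over `ℤ` of a complex primitive `n`-th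
root of unity, so it divides the integer polynomial expressing the identity, and `Φ_n(ζ) = 0`.
-/

open Polynomial
open scoped Classical

open Finset

section QuadraticCharFiber

variable {F : Type*} [Field F] [Fintype F] [DecidableEq F]

variable (F) in
def quadraticCharFiber (e : ℤ) : Finset F := {t | quadraticChar F t = e}

@[simp]
lemma mem_quadraticCharFiber {e : ℤ} {t : F} :
    t ∈ quadraticCharFiber F e ↔ quadraticChar F t = e := by
  simp [quadraticCharFiber]

lemma quadraticCharFiber_map_mulRight {u : F} (hu : u ≠ 0) (e : ℤ) :
    (quadraticCharFiber F e).map (Equiv.mulRight₀ u hu).toEmbedding =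
      quadraticCharFiber F (e * quadraticChar F u) := by
  ext s
  have hs : quadraticChar F s = quadraticChar F (s * u⁻¹) * quadraticChar F u := by
    rw [← map_mul, inv_mul_cancel_right₀ hu]
  rw [mem_map_equiv, mem_quadraticCharFiber, mem_quadraticCharFiber, Equiv.mulRight₀_symm_apply,
    hs, mul_left_inj' (quadraticChar_eq_zero_iff.not.mpr hu)]

lemma ne_zero_of_mem_quadraticCharFiber {e : ℤ} (he : e ≠ 0) {t : F}
    (ht : t ∈ quadraticCharFiber F e) : t ≠ 0 := by
  rintro rfl
  simp [eq_comm, he] at ht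

lemma univ_erase_zero_eq_quadraticCharFiber_union :
    univ.erase (0 : F) = quadraticCharFiber F 1 ∪ quadraticCharFiber F (-1) := by
  ext t
  simp only [mem_erase, mem_univ, and_true, mem_union, mem_quadraticCharFiber]
  refine ⟨quadraticChar_dichotomy, ?_⟩
  rintro (h | h) rfl <;> simp at h

lemma disjoint_quadraticCharFiber_one_neg_one :
    Disjoint (quadraticCharFiber F 1) (quadraticCharFiber F (-1)) := by
  rw [disjoint_left]
  intro t h1 h2
  rw [mem_quadraticCharFiber] at h1 h2
  omega

lemma card_quadraticCharFiber_neg_one_eq_card_one (hF : ringChar F ≠ 2) :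
    #(quadraticCharFiber F (-1)) = #(quadraticCharFiber F 1) := by
  obtain ⟨c, hc⟩ := quadraticChar_exists_neg_one hF
  have hc0 : c ≠ 0 :=
    ne_zero_of_mem_quadraticCharFiber (by norm_num) (mem_quadraticCharFiber.mpr hc)
  rw [← card_map (Equiv.mulRight₀ c hc0).toEmbedding, quadraticCharFiber_map_mulRight, hc]
  norm_num

lemma card_quadraticCharFiber_one (hF : ringChar F ≠ 2) :
    #(quadraticCharFiber F 1) = (Fintype.card F - 1) / 2 := by
  have h := card_union_of_disjoint (disjoint_quadraticCharFiber_one_neg_one (F := F))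
  rw [← univ_erase_zero_eq_quadraticCharFiber_union, card_erase_of_mem (mem_univ _), card_univ,
    card_quadraticCharFiber_neg_one_eq_card_one hF] at h
  omega

end QuadraticCharFiber

section GaussPeriod

variable {F K : Type*} [Field F] [Fintype F] [DecidableEq F] [Field K] (ψ : AddChar F K)

def gaussPeriod (e : ℤ) : K := ∑ t ∈ quadraticCharFiber F e, ψ t

lemma sum_quadraticCharFiber_mul {u : F} (hu : u ≠ 0) (e : ℤ) :
    ∑ t ∈ quadraticCharFiber F e, ψ (t * u) = gaussPeriod ψ (e * quadraticChar F u) := by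
  rw [gaussPeriod, ← quadraticCharFiber_map_mulRight hu, sum_map]
  rfl

lemma gaussPeriod_one_add_gaussPeriod_neg_one (hψ : ψ ≠ 1) :
    gaussPeriod ψ 1 + gaussPeriod ψ (-1) = -1 := by
  have h := AddChar.sum_eq_zero_of_ne_one hψ
  rw [← add_sum_erase _ _ (mem_univ 0), univ_erase_zero_eq_quadraticCharFiber_union,
    sum_union disjoint_quadraticCharFiber_one_neg_one, AddChar.map_zero_eq_one] at h
  rw [gaussPeriod, gaussPeriod]
  linear_combination h

lemma gaussSum_quadraticChar_eq_gaussPeriod_sub :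
    gaussSum ((quadraticChar F).ringHomComp (Int.castRingHom K)) ψ =
      gaussPeriod ψ 1 - gaussPeriod ψ (-1) := by
  have hfiber (e : ℤ) : ∑ t ∈ quadraticCharFiber F e,
      (quadraticChar F).ringHomComp (Int.castRingHom K) t * ψ t = e * gaussPeriod ψ e := by
    rw [gaussPeriod, mul_sum]
    refine sum_congr rfl fun t ht => ?_
    rw [MulChar.ringHomComp_apply, mem_quadraticCharFiber.mp ht, eq_intCast]
  rw [gaussSum, ← add_sum_erase _ _ (mem_univ 0), univ_erase_zero_eq_quadraticCharFiber_union,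
    sum_union disjoint_quadraticCharFiber_one_neg_one, hfiber, hfiber, MulChar.map_zero, zero_mul]
  push_cast
  ring

lemma four_mul_gaussPeriod_mul_gaussPeriod (hF : ringChar F ≠ 2) (hK : ringChar K ≠ 2)
    (hψ : ψ.IsPrimitive) :
    4 * (gaussPeriod ψ 1 * gaussPeriod ψ (-1)) =
      1 - quadraticChar F (-1) * Fintype.card F := by
  set χ := (quadraticChar F).ringHomComp (Int.castRingHom K)
  have hχ : χ ≠ 1 := by
    obtain ⟨a, ha⟩ := quadraticChar_exists_neg_one' hF
    refine MulChar.ne_one_iff.mpr ⟨a, ?_⟩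
    simpa [χ, ha] using Ring.neg_one_ne_one_of_char_ne_two hK
  have hsq := gaussSum_sq hχ ((quadraticChar_isQuadratic F).comp _) hψ
  have hsum := gaussPeriod_one_add_gaussPeriod_neg_one ψ (by simpa using hψ one_ne_zero)
  rw [gaussSum_quadraticChar_eq_gaussPeriod_sub, MulChar.ringHomComp_apply, eq_intCast] at hsq
  linear_combination (gaussPeriod ψ 1 + gaussPeriod ψ (-1) - 1) * hsum - hsq

lemma prod_sum_quadraticCharFiber_neg_one_mul (hF : ringChar F ≠ 2) :
    ∏ u ∈ univ.erase 0, ∑ t ∈ quadraticCharFiber F (-1), ψ (t * u) =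
      (gaussPeriod ψ 1 * gaussPeriod ψ (-1)) ^ ((Fintype.card F - 1) / 2) := by
  have hfiber (e : ℤ) (he : e ≠ 0) : ∏ u ∈ quadraticCharFiber F e,
      ∑ t ∈ quadraticCharFiber F (-1), ψ (t * u) =
        gaussPeriod ψ (-e) ^ #(quadraticCharFiber F e) := by
    rw [← prod_const]
    refine prod_congr rfl fun u hu => ?_
    rw [sum_quadraticCharFiber_mul ψ (ne_zero_of_mem_quadraticCharFiber he hu),
      mem_quadraticCharFiber.mp hu, neg_one_mul]
  rw [univ_erase_zero_eq_quadraticCharFiber_union,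
    prod_union disjoint_quadraticCharFiber_one_neg_one, hfiber 1 one_ne_zero,
    hfiber (-1) (by norm_num), neg_neg, card_quadraticCharFiber_neg_one_eq_card_one hF,
    card_quadraticCharFiber_one hF, mul_pow, mul_comm]

end GaussPeriod

theorem IsPrimitiveRoot.aeval_eq_zero_of_aeval_eq_zero {L K : Type*} [Field L] [CharZero L]
    [CommRing K] [IsDomain K] {n : ℕ} (hn : 0 < n) {μ : L} (hμ : IsPrimitiveRoot μ n) {ζ : K}
    (hζ : IsPrimitiveRoot ζ n) {f : ℤ[X]} (hf : aeval μ f = 0) : aeval ζ f = 0 := by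
  obtain ⟨g, rfl⟩ : cyclotomic n ℤ ∣ f :=
    cyclotomic_eq_minpoly hμ hn ▸ minpoly.isIntegrallyClosed_dvd (hμ.isIntegral hn) hf
  rw [map_mul, aeval_def, eval₂_eq_eval_map, map_cyclotomic, (hζ.isRoot_cyclotomic hn).eq_zero,
    zero_mul]

namespace ZMod

lemma injOn_natCast_Ico_one (n : ℕ) : Set.InjOn (Nat.cast : ℕ → ZMod n) (Ico 1 n) := by
  intro i hi j hj h
  rw [← val_cast_of_lt (mem_Ico.mp hi).2, h, val_cast_of_lt (mem_Ico.mp hj).2]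

lemma image_natCast_Ico_one (n : ℕ) [NeZero n] :
    (Ico 1 n).image (Nat.cast : ℕ → ZMod n) = univ.erase 0 := by
  ext u
  simp only [mem_image, mem_Ico, mem_erase, mem_univ, and_true]
  constructor
  · rintro ⟨i, ⟨hi1, hin⟩, rfl⟩ hi
    rw [natCast_eq_zero_iff] at hi
    exact (Nat.eq_zero_of_dvd_of_lt hi hin).not_gt hi1
  · intro hu
    exact ⟨u.val, ⟨Nat.one_le_iff_ne_zero.mpr ((val_ne_zero u).mpr hu), val_lt u⟩,
      natCast_zmod_val u⟩

end ZMod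

lemma sum_filter_not_isSquare_pow_mul {K : Type*} [Field K] {n : ℕ} [Fact n.Prime] {ζ : K}
    (hζ : ζ ^ n = 1) (m : ℕ) :
    ∑ i ∈ (Ico 1 n).filter (fun i : ℕ => ¬ IsSquare (i : ZMod n)), ζ ^ (i * m) =
      ∑ t ∈ quadraticCharFiber (ZMod n) (-1), AddChar.zmodChar n hζ (t * m) := by
  have hfiber : quadraticCharFiber (ZMod n) (-1) = (univ.erase 0).filter (¬ IsSquare ·) := by
    ext t
    simp only [mem_quadraticCharFiber, quadraticChar_neg_one_iff_not_isSquare, mem_filter,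
      mem_erase, mem_univ, and_true, iff_and_self]
    rintro ht rfl
    exact ht IsSquare.zero
  rw [hfiber, ← ZMod.image_natCast_Ico_one, filter_image,
    sum_image ((ZMod.injOn_natCast_Ico_one n).mono (filter_subset _ _))]
  refine sum_congr rfl fun i _ => ?_
  rw [← Nat.cast_mul, AddChar.zmodChar_apply']

lemma pow_eq_of_four_mul_eq_one_sub_χ₄_mul {K : Type*} [Field K] (hK : ringChar K ≠ 2)
    {n k : ℕ} (hk : (n % 4 = 1 ∧ k = n / 4) ∨ (n % 4 = 3 ∧ k = n / 4 + 1)) {x : K}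
    (hx : 4 * x = 1 - ZMod.χ₄ n * n) :
    x ^ ((n - 1) / 2) = (k : K) ^ ((n - 1) / 2) := by
  have h4K : (4 : K) ≠ 0 := by
    simpa [show (4 : K) = 2 * 2 by norm_num] using Ring.two_ne_zero hK
  rcases hk with ⟨h1, rfl⟩ | ⟨h3, rfl⟩
  · have hnK : (n : K) = 4 * (n / 4 : ℕ) + 1 := by
      exact_mod_cast congrArg (Nat.cast : ℕ → K) (show n = 4 * (n / 4) + 1 by omega)
    have hx' : x = -((n / 4 : ℕ) : K) := by
      refine mul_left_cancel₀ h4K ?_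
      rw [hx, ZMod.χ₄_nat_one_mod_four h1, hnK]
      push_cast
      ring
    rw [hx', Even.neg_pow ⟨n / 4, by omega⟩]
  · have hnK : (n : K) + 1 = 4 * (n / 4 + 1 : ℕ) := by
      exact_mod_cast congrArg (Nat.cast : ℕ → K) (show n + 1 = 4 * (n / 4 + 1) by omega)
    have hx' : x = ((n / 4 + 1 : ℕ) : K) := by
      refine mul_left_cancel₀ h4K ?_
      rw [hx, ZMod.χ₄_nat_three_mod_four h3, ← hnK]
      push_cast
      ring
    rw [hx']

theorem prod_sum_filter_not_isSquare_pow_mul_of_ringChar_ne_two {K : Type*} [Field K]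
    (hK : ringChar K ≠ 2) {n k : ℕ} (hn : n.Prime) (hn2 : n ≠ 2) {ζ : K}
    (hζ : IsPrimitiveRoot ζ n) (hk : (n % 4 = 1 ∧ k = n / 4) ∨ (n % 4 = 3 ∧ k = n / 4 + 1)) :
    ∏ m ∈ Ico 1 n, ∑ i ∈ (Ico 1 n).filter (fun i : ℕ => ¬ IsSquare (i : ZMod n)), ζ ^ (i * m) =
      (k : K) ^ ((n - 1) / 2) := by
  have : Fact n.Prime := ⟨hn⟩
  have hF : ringChar (ZMod n) ≠ 2 := by rwa [ZMod.ringChar_zmod_n]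
  set ψ := AddChar.zmodChar n hζ.pow_eq_one
  have h4 := four_mul_gaussPeriod_mul_gaussPeriod ψ hF hK
    (AddChar.zmodChar_primitive_of_primitive_root n hζ)
  rw [quadraticChar_neg_one hF, ZMod.card] at h4
  -- the filter in the statement is decided classically; switch to the `Fintype` instance
  rw [filter_congr_decidable]
  simp_rw [sum_filter_not_isSquare_pow_mul hζ.pow_eq_one]
  rw [← prod_image (ZMod.injOn_natCast_Ico_one n)
      (f := fun u => ∑ t ∈ quadraticCharFiber (ZMod n) (-1), ψ (t * u)),
    ZMod.image_natCast_Ico_one, prod_sum_quadraticCharFiber_neg_one_mul ψ hF, ZMod.card]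
  exact pow_eq_of_four_mul_eq_one_sub_χ₄_mul hK hk h4

noncomputable def nonresidueEigenvalueProduct (n : ℕ) : ℤ[X] :=
  ∏ m ∈ Ico 1 n, ∑ i ∈ (Ico 1 n).filter (fun i : ℕ => ¬ IsSquare (i : ZMod n)), X ^ (i * m)

lemma aeval_nonresidueEigenvalueProduct {K : Type*} [CommRing K] (n : ℕ) (ζ : K) :
    aeval ζ (nonresidueEigenvalueProduct n) =
      ∏ m ∈ Ico 1 n, ∑ i ∈ (Ico 1 n).filter (fun i : ℕ => ¬ IsSquare (i : ZMod n)),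
        ζ ^ (i * m) := by
  simp [nonresidueEigenvalueProduct, map_prod, map_sum]

theorem stmt9_general {K : Type*} [Field K]
    (n k : ℕ)
    (hn : n.Prime) (hn2 : n ≠ 2)
    (ζ : K) (hζ : IsPrimitiveRoot ζ n)
    (hk : (n % 4 = 1 ∧ k = n / 4) ∨ (n % 4 = 3 ∧ k = n / 4 + 1)) :
    ∏ m ∈ Finset.Ico 1 n,
      (∑ i ∈ (Finset.Ico 1 n).filter (fun i : ℕ => ¬ IsSquare ((i : ZMod n))),
        ζ ^ (i * m)) = (k : K) ^ ((n - 1) / 2) := by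
  have hμ := Complex.isPrimitiveRoot_exp n hn.ne_zero
  have hℂ := prod_sum_filter_not_isSquare_pow_mul_of_ringChar_ne_two (by simp) hn hn2 hμ hk
  have hK := hμ.aeval_eq_zero_of_aeval_eq_zero hn.pos hζ
    (f := nonresidueEigenvalueProduct n - C ((k : ℤ) ^ ((n - 1) / 2)))
    (by rw [map_sub, aeval_nonresidueEigenvalueProduct, sub_eq_zero]; exact hℂ.trans (by simp))
  simpa [aeval_nonresidueEigenvalueProduct, sub_eq_zero] using hK

/-- The eigenvalue product computation in the proof of Theorem 2: for an odd prime
`n ≠ p` and a primitive `n`-th root of unity `ζ` in an extension `K` of `F_q`,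
`∏_{m=1}^{n-1} (∑_{i ∈ NR(n)} ζ^(i m)) = (k*)^((n-1)/2)`, where `k*` is the integer
nearest to `n/4`. -/
theorem stmt9 {F K : Type*} [Field F] [Fintype F] [Field K] [Algebra F K]
    (p n k : ℕ) [Fact p.Prime] [CharP F p]
    (hn : n.Prime) (hn2 : n ≠ 2) (hnp : n ≠ p)
    (ζ : K) (hζ : IsPrimitiveRoot ζ n)
    (hk : (n % 4 = 1 ∧ k = n / 4) ∨ (n % 4 = 3 ∧ k = n / 4 + 1)) :
    ∏ m ∈ Finset.Ico 1 n,
      (∑ i ∈ (Finset.Ico 1 n).filter (fun i : ℕ => ¬ IsSquare ((i : ZMod n))),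
        ζ ^ (i * m)) = (k : K) ^ ((n - 1) / 2) :=
  stmt9_general n k hn hn2 ζ hζ hk
end

section
/- Let F_q be a finite field of characteristic p, let n be a prime different from p, and let f : {1, …, n−1} → F_q be a multiplicative function, i.e., f(i·j mod n) = f(i)·f(j) for all i, j ∈ {1, …, n−1} and f is not identically zero. Then the polynomial Σ_{i=1}^{n−1} f(i)·X^i has unit image in F_q[X]/(Q_n). -/
open Polynomial

lemma sum_mod_reindex {M : Type*} [AddCommMonoid M] {n : ℕ} (hn : n.Prime) {m : ℕ}
    (hm : ¬ n ∣ m) (g : ℕ → M) :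
    ∑ c ∈ Finset.Ico 1 n, g (c * m % n) = ∑ i ∈ Finset.Ico 1 n, g i := by
  haveI : Fact n.Prime := ⟨hn⟩
  have hn0 : 0 < n := hn.pos
  have hinj : ∀ c ∈ Finset.Ico 1 n, ∀ c' ∈ Finset.Ico 1 n,
      c * m % n = c' * m % n → c = c' := by
    intro c hc c' hc' h
    simp only [Finset.mem_Ico] at hc hc'
    have hmz : (m : ZMod n) ≠ 0 := by
      rw [Ne, ZMod.natCast_eq_zero_iff]; exact hm
    have h1 : ((c * m : ℕ) : ZMod n) = ((c' * m : ℕ) : ZMod n) := by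
      rw [ZMod.natCast_eq_natCast_iff']; exact h
    push_cast at h1
    have h2 : ((c : ZMod n)) = c' := mul_right_cancel₀ hmz h1
    have := congrArg ZMod.val h2
    rwa [ZMod.val_cast_of_lt hc.2, ZMod.val_cast_of_lt hc'.2] at this
  have hmaps : ∀ c ∈ Finset.Ico 1 n, c * m % n ∈ Finset.Ico 1 n := by
    intro c hc
    simp only [Finset.mem_Ico] at hc ⊢
    refine ⟨?_, Nat.mod_lt _ hn0⟩
    rcases Nat.eq_zero_or_pos (c * m % n) with h0 | h1
    · exfalso
      have hd : n ∣ c * m := Nat.dvd_of_mod_eq_zero h0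
      rcases hn.dvd_mul.mp hd with h | h
      · exact absurd (Nat.le_of_dvd (by omega) h) (by omega)
      · exact hm h
    · omega
  have himg : (Finset.Ico 1 n).image (fun c => c * m % n) = Finset.Ico 1 n := by
    apply Finset.eq_of_subset_of_card_le
    · intro x hx
      obtain ⟨c, hc, rfl⟩ := Finset.mem_image.mp hx
      exact hmaps c hc
    · rw [Finset.card_image_of_injOn (fun a ha b hb => hinj a ha b hb)]
  calc ∑ c ∈ Finset.Ico 1 n, g (c * m % n)
      = ∑ i ∈ (Finset.Ico 1 n).image (fun c => c * m % n), g i :=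
        (Finset.sum_image hinj).symm
    _ = ∑ i ∈ Finset.Ico 1 n, g i := by rw [himg]

/-- Theorem 3: for a prime `n ≠ p`, any multiplicative function
`f : {1, …, n-1} → F_q` gives a polynomial `∑_{i=1}^{n-1} f(i) X^i` with unit image in
`F_q[X]/(Q_n)`. -/
theorem stmt11 {F : Type*} [Field F] [Fintype F] (p n : ℕ) [Fact p.Prime] [CharP F p]
    (hn : n.Prime) (hnp : n ≠ p) (f : ℕ → F)
    (hmul : ∀ i j : ℕ, 1 ≤ i → i < n → 1 ≤ j → j < n → f (i * j % n) = f i * f j)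
    (hnz : ∃ i : ℕ, 1 ≤ i ∧ i < n ∧ f i ≠ 0) :
    IsUnit (Ideal.Quotient.mk
      (Ideal.span {(∑ i ∈ Finset.range n, X ^ i : F[X])})
      (∑ i ∈ Finset.Ico 1 n, C (f i) * X ^ i)) := by
  have hn2 : 2 ≤ n := hn.two_le
  haveI : Fact n.Prime := ⟨hn⟩
  set Q : F[X] := ∑ i ∈ Finset.range n, X ^ i with hQdef
  set I : Ideal F[X] := Ideal.span {Q} with hIdef
  set q : F[X] →+* F[X] ⧸ I := Ideal.Quotient.mk I with hqdef
  -- basic facts about f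
  have hf1 : f 1 = 1 := by
    obtain ⟨i, hi1, hin, hfi⟩ := hnz
    have h := hmul i 1 hi1 hin le_rfl (by omega)
    rw [mul_one, Nat.mod_eq_of_lt hin] at h
    exact mul_left_cancel₀ hfi (by rw [← h, mul_one])
  have hfne : ∀ c, 1 ≤ c → c < n → f c ≠ 0 := by
    intro c hc1 hcn
    have hcz : (c : ZMod n) ≠ 0 := by
      rw [Ne, ZMod.natCast_eq_zero_iff]
      intro h; exact absurd (Nat.le_of_dvd (by omega) h) (by omega)
    set j : ℕ := ((c : ZMod n)⁻¹).val with hjdef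
    have hjz : ((c : ZMod n)⁻¹) ≠ 0 := inv_ne_zero hcz
    have hjn : j < n := ZMod.val_lt _
    have hj1 : 1 ≤ j := by
      rcases Nat.eq_zero_or_pos j with h0 | h1
      · exact absurd ((ZMod.val_eq_zero _).mp h0) hjz
      · exact h1
    have hcj : c * j % n = 1 := by
      have : ((c * j : ℕ) : ZMod n) = 1 := by
        push_cast [hjdef]
        rw [ZMod.natCast_val, ZMod.cast_id]
        exact mul_inv_cancel₀ hcz
      have hv := congrArg ZMod.val this
      rwa [ZMod.val_natCast, ZMod.val_one] at hv
    have h := hmul c j hc1 hcn hj1 hjn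
    rw [hcj, hf1] at h
    intro h0; rw [h0, zero_mul] at h; exact one_ne_zero h
  -- quotient ring basics
  have hQI : Q ∈ I := Ideal.mem_span_singleton_self Q
  have hQ0 : q Q = 0 := Ideal.Quotient.eq_zero_iff_mem.mpr hQI
  set x : F[X] ⧸ I := q X with hxdef
  have hxn : x ^ n = 1 := by
    have hmem : X ^ n - 1 ∈ I := by
      rw [← geom_sum_mul]
      exact Ideal.mul_mem_right _ _ hQI
    have h0 := Ideal.Quotient.eq_zero_iff_mem.mpr hmem
    rw [show ((X:F[X])^n - 1 : F[X]) = X^n - 1 from rfl] at h0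
    have : q (X ^ n - 1) = 0 := h0
    rw [map_sub, map_pow, map_one, sub_eq_zero] at this
    exact this
  set C' : F →+* F[X] ⧸ I := q.comp Polynomial.C with hC'def
  have hC'app : ∀ a : F, C' a = q (Polynomial.C a) := fun a => rfl
  -- images of the two polynomials
  have ha : q (∑ i ∈ Finset.Ico 1 n, Polynomial.C (f i) * X ^ i)
      = ∑ i ∈ Finset.Ico 1 n, C' (f i) * x ^ i := by
    rw [map_sum]; exact Finset.sum_congr rfl fun i _ => by rw [map_mul, map_pow]; rfl
  have hsum_ico : ∑ k ∈ Finset.Ico 1 n, x ^ k = -1 := by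
    have h0 : ∑ k ∈ Finset.range n, x ^ k = 0 := by
      rw [← hQ0, hQdef, map_sum]
      exact Finset.sum_congr rfl fun i _ => by rw [map_pow]
    rw [Finset.range_eq_Ico, Finset.sum_eq_sum_Ico_succ_bot (by omega : 0 < n)] at h0
    rw [pow_zero] at h0
    linear_combination h0
  -- the product computation
  set T : F := ∑ c ∈ Finset.Ico 1 n, f c with hTdef
  set b : F[X] ⧸ I := ∑ j ∈ Finset.Ico 1 n, C' (f j)⁻¹ * x ^ j with hbdef
  have key : (∑ i ∈ Finset.Ico 1 n, C' (f i) * x ^ i) * b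
      = C' (f (n-1) * ((n-1 : ℕ) : F) + f (n-1) - T) := by
    rw [hbdef, Finset.sum_mul_sum]
    have step1 : ∀ j ∈ Finset.Ico 1 n,
        ∑ c ∈ Finset.Ico 1 n, (C' (f c) * x ^ c) * (C' (f j)⁻¹ * x ^ j)
        = ∑ c ∈ Finset.Ico 1 n, C' (f c) * x ^ ((c+1) * j % n) := by
      intro j hj
      simp only [Finset.mem_Ico] at hj
      have hndj : ¬ n ∣ j := fun h => absurd (Nat.le_of_dvd (by omega) h) (by omega)
      rw [← sum_mod_reindex hn hndj
        (fun i => (C' (f i) * x ^ i) * (C' (f j)⁻¹ * x ^ j))]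
      apply Finset.sum_congr rfl
      intro c hc
      simp only [Finset.mem_Ico] at hc
      have hfc : f (c * j % n) = f c * f j := hmul c j hc.1 hc.2 hj.1 hj.2
      have hfj : f j ≠ 0 := hfne j hj.1 hj.2
      have hcoef : f c * f j * (f j)⁻¹ = f c := by field_simp
      have hexp : (c * j % n + j) % n = (c+1) * j % n := by
        rw [add_one_mul, Nat.add_mod (c*j) j, Nat.mod_eq_of_lt hj.2]
      calc (C' (f (c * j % n)) * x ^ (c * j % n)) * (C' (f j)⁻¹ * x ^ j)
          = (C' (f c * f j) * C' (f j)⁻¹) * (x ^ (c * j % n) * x ^ j) := by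
            rw [hfc]; exact mul_mul_mul_comm _ _ _ _
        _ = C' (f c) * x ^ (c * j % n + j) := by rw [← map_mul, hcoef, ← pow_add]
        _ = C' (f c) * x ^ ((c+1) * j % n) := by
            rw [pow_eq_pow_mod _ hxn, hexp]
    have hIco : Finset.Ico 1 (n-1+1) = Finset.Ico 1 n := by
      rw [Nat.sub_add_cancel (by omega : 1 ≤ n)]
    have hStop : ∑ j ∈ Finset.Ico 1 n, x ^ ((n-1+1) * j % n) = ((n-1 : ℕ) : F[X] ⧸ I) := by
      have hz : ∀ j ∈ Finset.Ico 1 n, x ^ ((n-1+1) * j % n) = 1 := by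
        intro j _
        rw [Nat.sub_add_cancel (by omega : 1 ≤ n), Nat.mul_mod_right, pow_zero]
      rw [Finset.sum_congr rfl hz, Finset.sum_const, Nat.card_Ico, nsmul_eq_mul, mul_one]
    have hSmid : ∀ c ∈ Finset.Ico 1 (n-1),
        ∑ j ∈ Finset.Ico 1 n, x ^ ((c+1) * j % n) = -1 := by
      intro c hc
      simp only [Finset.mem_Ico] at hc
      have hnd : ¬ n ∣ (c+1) := fun h => absurd (Nat.le_of_dvd (by omega) h) (by omega)
      calc ∑ j ∈ Finset.Ico 1 n, x ^ ((c+1) * j % n)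
          = ∑ j ∈ Finset.Ico 1 n, x ^ (j * (c+1) % n) := by
            apply Finset.sum_congr rfl; intro j _; rw [mul_comm]
        _ = ∑ k ∈ Finset.Ico 1 n, x ^ k := sum_mod_reindex hn hnd (fun k => x ^ k)
        _ = -1 := hsum_ico
    have hT : T = ∑ c ∈ Finset.Ico 1 (n-1), f c + f (n-1) := by
      rw [hTdef, ← hIco, Finset.sum_Ico_succ_top (by omega : 1 ≤ n-1)]
    calc ∑ i ∈ Finset.Ico 1 n, ∑ j ∈ Finset.Ico 1 n,
          (C' (f i) * x ^ i) * (C' (f j)⁻¹ * x ^ j)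
        = ∑ j ∈ Finset.Ico 1 n, ∑ c ∈ Finset.Ico 1 n,
            (C' (f c) * x ^ c) * (C' (f j)⁻¹ * x ^ j) := Finset.sum_comm
      _ = ∑ j ∈ Finset.Ico 1 n, ∑ c ∈ Finset.Ico 1 n,
            C' (f c) * x ^ ((c+1) * j % n) := Finset.sum_congr rfl step1
      _ = ∑ c ∈ Finset.Ico 1 n, ∑ j ∈ Finset.Ico 1 n,
            C' (f c) * x ^ ((c+1) * j % n) := Finset.sum_comm
      _ = ∑ c ∈ Finset.Ico 1 n, C' (f c) * ∑ j ∈ Finset.Ico 1 n, x ^ ((c+1) * j % n) :=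
            Finset.sum_congr rfl fun c _ => (Finset.mul_sum _ _ _).symm
      _ = ∑ c ∈ Finset.Ico 1 (n-1), C' (f c) * ∑ j ∈ Finset.Ico 1 n, x ^ ((c+1) * j % n)
            + C' (f (n-1)) * ∑ j ∈ Finset.Ico 1 n, x ^ ((n-1+1) * j % n) := by
            rw [← hIco, Finset.sum_Ico_succ_top (by omega : 1 ≤ n-1)]
      _ = ∑ c ∈ Finset.Ico 1 (n-1), C' (f c) * (-1)
            + C' (f (n-1)) * ((n-1 : ℕ) : F[X] ⧸ I) := by
            rw [hStop]
            exact congrArg (· + _) (Finset.sum_congr rfl fun c hc => by rw [hSmid c hc])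
      _ = C' (f (n-1) * ((n-1 : ℕ) : F) + f (n-1) - T) := by
            rw [hT]
            have hneg : ∑ c ∈ Finset.Ico 1 (n-1), C' (f c) * (-1)
                = -∑ c ∈ Finset.Ico 1 (n-1), C' (f c) := by
              rw [← Finset.sum_neg_distrib]
              exact Finset.sum_congr rfl fun c _ => by ring
            simp only [map_sub, map_add, map_mul, map_sum, map_natCast]
            rw [hneg]
            ring
  -- the scalar is nonzero
  have hcast : ((n-1 : ℕ) : F) = (n : F) - 1 := by
    push_cast [Nat.cast_sub (by omega : 1 ≤ n)]
    ring
  have hnF : ((n : ℕ) : F) ≠ 0 := by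
    intro h
    rw [CharP.cast_eq_zero_iff F p] at h
    exact hnp ((Nat.prime_dvd_prime_iff_eq Fact.out hn).mp h).symm
  have hfn1 : f (n-1) ≠ 0 := hfne (n-1) (by omega) (by omega)
  have hs : f (n-1) * ((n-1 : ℕ) : F) + f (n-1) - T ≠ 0 := by
    by_cases hT0 : T = 0
    · have : f (n-1) * ((n-1 : ℕ) : F) + f (n-1) - T = f (n-1) * (n : F) := by
        rw [hT0, hcast]; ring
      rw [this]
      exact mul_ne_zero hfn1 hnF
    · have hall : ∀ c, 1 ≤ c → c < n → f c = 1 := by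
        intro c hc1 hcn
        have hnd : ¬ n ∣ c := fun h => absurd (Nat.le_of_dvd (by omega) h) (by omega)
        have h1 : T * f c = T := by
          rw [hTdef, Finset.sum_mul]
          calc ∑ i ∈ Finset.Ico 1 n, f i * f c
              = ∑ i ∈ Finset.Ico 1 n, f (i * c % n) := by
                apply Finset.sum_congr rfl; intro i hi
                simp only [Finset.mem_Ico] at hi
                rw [hmul i c hi.1 hi.2 hc1 hcn]
            _ = ∑ i ∈ Finset.Ico 1 n, f i := sum_mod_reindex hn hnd f
        exact mul_left_cancel₀ hT0 (h1.trans (mul_one T).symm)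
      have hTval : T = ((n-1 : ℕ) : F) := by
        rw [hTdef,
          Finset.sum_congr rfl (fun c hc => by
            simp only [Finset.mem_Ico] at hc; exact hall c hc.1 hc.2),
          Finset.sum_const, Nat.card_Ico, nsmul_eq_mul, mul_one]
      have : f (n-1) * ((n-1 : ℕ) : F) + f (n-1) - T = 1 := by
        rw [hTval, hall (n-1) (by omega) (by omega), hcast]; ring
      rw [this]
      exact one_ne_zero
  have hunit : IsUnit (C' (f (n-1) * ((n-1 : ℕ) : F) + f (n-1) - T)) :=
    (isUnit_iff_ne_zero.mpr hs).map C'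
  have hfin : q (∑ i ∈ Finset.Ico 1 n, Polynomial.C (f i) * X ^ i) * b
      = C' (f (n-1) * ((n-1 : ℕ) : F) + f (n-1) - T) := by
    rw [ha]; exact key
  exact isUnit_of_mul_isUnit_left (hfin ▸ hunit)
end

section
/- Let F_q be a finite field of characteristic p, let n be a prime different from p, let f : {1, …, n−1} → F_q be a multiplicative function (f(i·j mod n) = f(i)·f(j) for all i, j, and f not identically zero), and let K be a field extension of F_q containing a primitive n-th root of unity ζ. Then for every m ∈ {1, …, n−1}, Σ_{i=1}^{n−1} f(i)·ζ^{i·m} ≠ 0 in K. -/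
open Polynomial

lemma zmod_sum_univ {n : ℕ} [NeZero n] {M : Type*} [AddCommMonoid M] (g : ZMod n → M) :
    ∑ a : ZMod n, g a = ∑ i ∈ Finset.range n, g (i : ZMod n) := by
  refine Finset.sum_bij' (fun a _ => a.val) (fun i _ => (i : ZMod n)) ?_ ?_ ?_ ?_ ?_
  · intro a _; exact Finset.mem_range.mpr (ZMod.val_lt a)
  · intro a _; exact Finset.mem_univ _
  · intro a _; simp [ZMod.natCast_val, ZMod.cast_id]
  · intro i hi; exact ZMod.val_natCast_of_lt (Finset.mem_range.mp hi)
  · intro a _; rw [ZMod.natCast_val, ZMod.cast_id]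

/-- The eigenvalue computation in the proof of Theorem 3: for a prime `n ≠ p`, a
multiplicative function `f : {1, …, n-1} → F_q`, and a primitive `n`-th root of unity `ζ`
in an extension `K` of `F_q`, all the sums `∑_{i=1}^{n-1} f(i) ζ^(i m)`, `1 ≤ m ≤ n-1`,
are nonzero. -/
theorem stmt12 {F K : Type*} [Field F] [Fintype F] [Field K] [Algebra F K]
    (p n : ℕ) [Fact p.Prime] [CharP F p]
    (hn : n.Prime) (hnp : n ≠ p) (f : ℕ → F)
    (hmul : ∀ i j : ℕ, 1 ≤ i → i < n → 1 ≤ j → j < n → f (i * j % n) = f i * f j)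
    (hnz : ∃ i : ℕ, 1 ≤ i ∧ i < n ∧ f i ≠ 0)
    (ζ : K) (hζ : IsPrimitiveRoot ζ n) :
    ∀ m : ℕ, 1 ≤ m → m < n →
      ∑ i ∈ Finset.Ico 1 n, algebraMap F K (f i) * ζ ^ (i * m) ≠ 0 := by
  intro m hm1 hmn
  haveI : Fact n.Prime := ⟨hn⟩
  haveI : NeZero n := ⟨hn.ne_zero⟩
  haveI : Fact (1 < n) := ⟨hn.one_lt⟩
  haveI : CharP K p := charP_of_injective_algebraMap (algebraMap F K).injective p
  -- f 1 = 1
  have hf1 : f 1 = 1 := by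
    obtain ⟨i, hi1, hin, hfi⟩ := hnz
    have h := hmul i 1 hi1 hin le_rfl hn.one_lt
    rw [mul_one, Nat.mod_eq_of_lt hin] at h
    exact mul_left_cancel₀ hfi (by rw [← h, mul_one])
  -- the primitive root ζ^m
  have hcop : n.Coprime m :=
    (Nat.Prime.coprime_iff_not_dvd hn).mpr (Nat.not_dvd_of_pos_of_lt hm1 hmn)
  have hζm : IsPrimitiveRoot (ζ ^ m) n := hζ.pow_of_coprime m hcop.symm
  -- the multiplicative character
  let χ : MulChar (ZMod n) K :=
  { toFun := fun x => if x = 0 then 0 else algebraMap F K (f x.val)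
    map_one' := by
      show (if (1 : ZMod n) = 0 then (0:K) else algebraMap F K (f (1 : ZMod n).val)) = 1
      rw [if_neg one_ne_zero, ZMod.val_one, hf1, map_one]
    map_mul' := by
      intro x y
      show (if x * y = 0 then (0:K) else algebraMap F K (f (x * y).val))
        = (if x = 0 then (0:K) else algebraMap F K (f x.val))
          * (if y = 0 then (0:K) else algebraMap F K (f y.val))
      rcases eq_or_ne x 0 with hx | hx
      · simp [hx]
      rcases eq_or_ne y 0 with hy | hy
      · simp [hy]
      have hxy : x * y ≠ 0 := mul_ne_zero hx hy
      have hx1 : 1 ≤ x.val := Nat.one_le_iff_ne_zero.mpr (fun h => hx ((ZMod.val_eq_zero x).mp h))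
      have hy1 : 1 ≤ y.val := Nat.one_le_iff_ne_zero.mpr (fun h => hy ((ZMod.val_eq_zero y).mp h))
      rw [if_neg hxy, if_neg hx, if_neg hy, ZMod.val_mul,
        hmul _ _ hx1 (ZMod.val_lt x) hy1 (ZMod.val_lt y), map_mul]
    map_nonunit' := by
      intro a ha
      show (if a = 0 then (0:K) else algebraMap F K (f a.val)) = 0
      rw [if_pos (by simpa [isUnit_iff_ne_zero] using ha)] }
  have hχ_apply : ∀ i : ℕ, 1 ≤ i → i < n →
      χ (i : ZMod n) = algebraMap F K (f i) := by
    intro i hi1 hin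
    have hne : (i : ZMod n) ≠ 0 := fun h =>
      Nat.not_dvd_of_pos_of_lt hi1 hin ((ZMod.natCast_eq_zero_iff i n).mp h)
    show (if (i : ZMod n) = 0 then 0 else algebraMap F K (f (i : ZMod n).val)) = _
    rw [if_neg hne, ZMod.val_natCast_of_lt hin]
  -- the additive character
  let ψ : AddChar (ZMod n) K := AddChar.zmodChar n hζm.pow_eq_one
  have hψ : ψ.IsPrimitive := AddChar.zmodChar_primitive_of_primitive_root n hζm
  -- the sum is the Gauss sum
  have key : ∑ i ∈ Finset.Ico 1 n, algebraMap F K (f i) * ζ ^ (i * m) = gaussSum χ ψ := by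
    rw [gaussSum, zmod_sum_univ (fun a => χ a * ψ a), Finset.range_eq_Ico,
      Finset.sum_eq_sum_Ico_succ_bot hn.pos]
    have h0 : χ ((0 : ℕ) : ZMod n) * ψ ((0 : ℕ) : ZMod n) = 0 := by
      simp only [Nat.cast_zero]
      have : χ (0 : ZMod n) = 0 := by
        show (if (0 : ZMod n) = 0 then 0 else algebraMap F K (f (0 : ZMod n).val)) = 0
        rw [if_pos rfl]
      rw [this, zero_mul]
    rw [h0, zero_add]
    refine Finset.sum_congr rfl (fun i hi => ?_)
    obtain ⟨hi1, hin⟩ := Finset.mem_Ico.mp hi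
    rw [hχ_apply i hi1 hin]
    congr 1
    show ζ ^ (i * m) = ψ (i : ZMod n)
    rw [AddChar.zmodChar_apply' hζm.pow_eq_one i, ← pow_mul, mul_comm]
  rw [key]
  by_cases hχ1 : χ = 1
  · -- trivial character: the sum is -1
    have hfone : ∀ i : ℕ, 1 ≤ i → i < n → f i = 1 := by
      intro i hi1 hin
      have hu : IsUnit ((i : ZMod n)) := by
        rw [isUnit_iff_ne_zero, Ne, ZMod.natCast_eq_zero_iff i n]
        exact Nat.not_dvd_of_pos_of_lt hi1 hin
      have := hχ_apply i hi1 hin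
      rw [hχ1, MulChar.one_apply hu] at this
      exact ((algebraMap F K).injective (show algebraMap F K (f i) = algebraMap F K 1 by
        rw [map_one]; exact this.symm))
    rw [← key]
    have : ∑ i ∈ Finset.Ico 1 n, algebraMap F K (f i) * ζ ^ (i * m)
        = ∑ i ∈ Finset.Ico 1 n, (ζ ^ m) ^ i := by
      refine Finset.sum_congr rfl (fun i hi => ?_)
      obtain ⟨hi1, hin⟩ := Finset.mem_Ico.mp hi
      rw [hfone i hi1 hin, map_one, one_mul, ← pow_mul, mul_comm]
    rw [this]
    have hgeom : ∑ i ∈ Finset.range n, (ζ ^ m) ^ i = 0 :=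
      hζm.geom_sum_eq_zero hn.one_lt
    rw [Finset.range_eq_Ico, Finset.sum_eq_sum_Ico_succ_bot hn.pos, pow_zero] at hgeom
    have : ∑ i ∈ Finset.Ico 1 n, (ζ ^ m) ^ i = -1 := by linear_combination hgeom
    rw [this]
    exact neg_ne_zero.mpr one_ne_zero
  · -- nontrivial character: Gauss sum is nonzero
    refine gaussSum_ne_zero_of_nontrivial ?_ hχ1 hψ
    rw [ZMod.card]
    intro h
    have hdvd : p ∣ n := (CharP.cast_eq_zero_iff K p n).mp h
    rcases (Nat.Prime.eq_one_or_self_of_dvd hn p hdvd) with h1 | h1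
    · exact (Fact.out : p.Prime).one_lt.ne' h1
    · exact hnp h1.symm
end

section
/- Let F_q be a finite field of characteristic p, let n be a prime different from p, and let f : {1, …, n−1} → F_q be a multiplicative function (f(i·j mod n) = f(i)·f(j) for all i, j, and f not identically zero). Set F = Σ_{i=1}^{n−1} f(i)·X^i regarded in R = F_q[X]/(X^n − 1). Then for every D ∈ F_q[X] divisible by X − 1 and all integers N, M ≥ 1: D^N·F ≡ D^M·F (mod X^n − 1) if and only if D^N·g ≡ D^M·g (mod X^n − 1) for every g ∈ R. -/
open Polynomial

lemma sum_zmod_val {n : ℕ} [NeZero n] {K : Type*} [AddCommMonoid K] (g : ℕ → K) :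
    ∑ k : ZMod n, g k.val = ∑ i ∈ Finset.range n, g i :=
  Finset.sum_nbij' (fun k => k.val) (fun i => (i : ZMod n))
    (fun a _ => Finset.mem_range.2 (ZMod.val_lt a)) (fun i _ => Finset.mem_univ _)
    (fun a _ => ZMod.natCast_rightInverse a)
    (fun i hi => ZMod.val_cast_of_lt (Finset.mem_range.1 hi)) (fun a _ => rfl)

lemma gauss_aux {F K : Type*} [Field F] [Field K] (φ : F →+* K) (n : ℕ) (hn : n.Prime)
    (hnK : (n : K) ≠ 0)
    (f : ℕ → F)
    (hmul : ∀ i j : ℕ, 1 ≤ i → i < n → 1 ≤ j → j < n → f (i * j % n) = f i * f j)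
    (hnz : ∃ i : ℕ, 1 ≤ i ∧ i < n ∧ f i ≠ 0)
    (α : K) (hα : α ^ n = 1) (hα1 : α ≠ 1) :
    (∑ i ∈ Finset.Ico 1 n, φ (f i) * α ^ i) ≠ 0 := by
  haveI : Fact n.Prime := ⟨hn⟩
  have hn1 : 1 < n := hn.one_lt
  haveI : Fact (1 < n) := ⟨hn1⟩
  -- f 1 = 1
  have hf1 : f 1 = 1 := by
    have h11 : f 1 * f 1 = f 1 := by
      have := hmul 1 1 le_rfl hn1 le_rfl hn1
      rw [Nat.mod_eq_of_lt hn1] at this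
      simpa using this.symm
    by_cases h0 : f 1 = 0
    · exfalso
      obtain ⟨i, hi1, hin, hfi⟩ := hnz
      have := hmul i 1 hi1 hin le_rfl hn1
      rw [mul_one, Nat.mod_eq_of_lt hin] at this
      exact hfi (by rw [this, h0, mul_zero])
    · have := mul_left_cancel₀ h0 (h11.trans (mul_one (f 1)).symm)
      exact this
  set χ : ZMod n → K := fun k => if k = 0 then 0 else φ (f k.val) with hχdef
  set ζ : ZMod n → K := fun k => α ^ k.val with hζdef
  have valpos : ∀ a : ZMod n, a ≠ 0 → 1 ≤ a.val := fun a ha =>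
    Nat.pos_of_ne_zero (fun h => ha ((ZMod.val_eq_zero a).1 h))
  have χmul : ∀ a b : ZMod n, χ (a * b) = χ a * χ b := by
    intro a b
    by_cases ha : a = 0
    · simp [hχdef, ha]
    by_cases hb : b = 0
    · simp [hχdef, hb]
    have hab : a * b ≠ 0 := mul_ne_zero ha hb
    simp only [hχdef, if_neg ha, if_neg hb, if_neg hab]
    rw [ZMod.val_mul, hmul _ _ (valpos a ha) (ZMod.val_lt a) (valpos b hb) (ZMod.val_lt b),
      map_mul]
  have χ1 : χ (1 : ZMod n) = 1 := by
    simp only [hχdef, if_neg (one_ne_zero : (1 : ZMod n) ≠ 0), ZMod.val_one, hf1, map_one]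
  have χne : ∀ a : ZMod n, a ≠ 0 → χ a ≠ 0 := by
    intro a ha
    have h : χ a * χ a⁻¹ = 1 := by rw [← χmul, mul_inv_cancel₀ ha, χ1]
    exact left_ne_zero_of_mul_eq_one h
  have ζ0 : ζ (0 : ZMod n) = 1 := by simp [hζdef]
  have αmod : ∀ m : ℕ, α ^ (m % n) = α ^ m := by
    intro m
    conv_rhs => rw [← Nat.div_add_mod m n]
    rw [pow_add, pow_mul, hα, one_pow, one_mul]
  have ζadd : ∀ a b : ZMod n, ζ (a + b) = ζ a * ζ b := by
    intro a b
    simp only [hζdef]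
    rw [ZMod.val_add, αmod, pow_add]
  have ζsum : ∑ k : ZMod n, ζ k = 0 := by
    have h : (∑ i ∈ Finset.range n, α ^ i) * (α - 1) = 0 := by
      rw [geom_sum_mul, hα, sub_self]
    have h2 : ∑ i ∈ Finset.range n, α ^ i = 0 :=
      (mul_eq_zero.1 h).resolve_right (sub_ne_zero.2 hα1)
    simpa only [hζdef, sum_zmod_val (fun i => α ^ i)] using h2
  have ζshift : ∀ d : ZMod n, d ≠ 0 → ∑ k : ZMod n, ζ (k * d) = 0 := by
    intro d hd
    rw [Fintype.sum_equiv (Equiv.mulRight₀ d hd) (fun k => ζ (k * d)) ζ (fun k => rfl)]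
    exact ζsum
  have ζshift' : ∀ d : ZMod n, d ≠ 0 →
      ∑ k ∈ Finset.univ.erase (0 : ZMod n), ζ (k * d) = -1 := by
    intro d hd
    have h := Finset.sum_erase_add Finset.univ (fun k => ζ (k * d))
      (Finset.mem_univ (0 : ZMod n))
    rw [ζshift d hd] at h
    simp only [zero_mul, ζ0] at h
    exact eq_neg_of_add_eq_zero_left h
  -- inner sum over b ≠ 0 of ζ (b * (c+1))
  have hT : ∀ c : ZMod n, ∑ b ∈ Finset.univ.erase (0 : ZMod n), ζ (b * (c + 1)) =
      -1 + (if c = -1 then (n : K) else 0) := by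
    intro c
    by_cases hc : c = -1
    · have hc0 : c + 1 = 0 := by rw [hc]; ring
      rw [if_pos hc]
      have : ∀ b ∈ Finset.univ.erase (0 : ZMod n), ζ (b * (c + 1)) = 1 := by
        intro b _; rw [hc0, mul_zero, ζ0]
      rw [Finset.sum_congr rfl this, Finset.sum_const,
        Finset.card_erase_of_mem (Finset.mem_univ _), Finset.card_univ, ZMod.card,
        nsmul_eq_mul, mul_one, Nat.cast_sub hn1.le, Nat.cast_one]
      ring
    · have hc0 : c + 1 ≠ 0 := fun h => hc (eq_neg_of_add_eq_zero_left h)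
      rw [if_neg hc, ζshift' _ hc0, add_zero]
  -- the sum in question equals ∑ χ k * ζ k
  have hG : ∑ i ∈ Finset.Ico 1 n, φ (f i) * α ^ i = ∑ k : ZMod n, χ k * ζ k := by
    have h1 : ∀ k : ZMod n, χ k * ζ k =
        (fun i : ℕ => (if i = 0 then 0 else φ (f i)) * α ^ i) k.val := by
      intro k
      simp only [hχdef, hζdef]
      by_cases hk : k = 0
      · simp [hk]
      · rw [if_neg hk, if_neg (fun h => hk ((ZMod.val_eq_zero k).1 h))]
    rw [Finset.sum_congr rfl (fun k _ => h1 k),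
      sum_zmod_val (fun i : ℕ => (if i = 0 then 0 else φ (f i)) * α ^ i),
      Finset.range_eq_Ico, Finset.sum_eq_sum_Ico_succ_bot (by omega : 0 < n)]
    simp only [if_true, zero_mul, zero_add]
    symm
    apply Finset.sum_congr rfl
    intro i hi
    have hi0 : i ≠ 0 := by have := (Finset.mem_Ico.mp hi).1; omega
    rw [if_neg hi0]
  rw [hG]
  by_cases htriv : ∀ k : ZMod n, k ≠ 0 → χ k = 1
  · -- trivial character: sum is -1
    have hval : ∑ k : ZMod n, χ k * ζ k = -1 := by
      rw [← Finset.sum_erase_add Finset.univ (fun k => χ k * ζ k)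
        (Finset.mem_univ (0 : ZMod n))]
      have h0 : χ (0 : ZMod n) * ζ 0 = 0 := by simp [hχdef]
      rw [h0, add_zero]
      have h1 : ∀ k ∈ Finset.univ.erase (0 : ZMod n), χ k * ζ k = ζ (k * 1) := by
        intro k hk
        rw [htriv k (Finset.ne_of_mem_erase hk), one_mul, mul_one]
      rw [Finset.sum_congr rfl h1, ζshift' 1 one_ne_zero]
    rw [hval]
    exact neg_ne_zero.2 one_ne_zero
  · push_neg at htriv
    obtain ⟨a, ha0, ha1⟩ := htriv
    have χsum : ∑ k : ZMod n, χ k = 0 := by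
      have h : χ a * ∑ k : ZMod n, χ k = ∑ k : ZMod n, χ k := by
        rw [Finset.mul_sum]
        rw [show (∑ k : ZMod n, χ a * χ k) = ∑ k : ZMod n, χ (a * k) from
          Finset.sum_congr rfl (fun k _ => (χmul a k).symm)]
        exact Fintype.sum_equiv (Equiv.mulLeft₀ a ha0) (fun k => χ (a * k)) χ (fun k => rfl)
      have h2 : (χ a - 1) * ∑ k : ZMod n, χ k = 0 := by rw [sub_mul, one_mul, h, sub_self]
      exact (mul_eq_zero.1 h2).resolve_left (sub_ne_zero.2 ha1)
    have χinv : ∀ b : ZMod n, b ≠ 0 → χ b * χ b⁻¹ = 1 := by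
      intro b hb; rw [← χmul, mul_inv_cancel₀ hb, χ1]
    have key : (∑ k : ZMod n, χ k * ζ k) * (∑ k : ZMod n, χ k⁻¹ * ζ k) = χ (-1) * n := by
      rw [Finset.sum_mul_sum, Finset.sum_comm]
      have hinner : ∀ b : ZMod n, (∑ a : ZMod n, χ a * ζ a * (χ b⁻¹ * ζ b)) =
          if b = 0 then 0 else ∑ c : ZMod n, χ c * ζ (b * (c + 1)) := by
        intro b
        by_cases hb : b = 0
        · rw [if_pos hb]; subst hb; simp [hχdef]
        · rw [if_neg hb]
          refine (Fintype.sum_equiv (Equiv.mulRight₀ b hb)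
            (fun c => χ c * ζ (b * (c + 1)))
            (fun a => χ a * ζ a * (χ b⁻¹ * ζ b)) (fun c => ?_)).symm
          simp only [Equiv.mulRight₀_apply]
          have hB : ζ (b * (c + 1)) = ζ (c * b) * ζ b := by
            rw [← ζadd]; congr 1; ring
          rw [hB, χmul c b]
          linear_combination (-(χ c * ζ (c * b) * ζ b)) * χinv b hb
      rw [Finset.sum_congr rfl (fun b _ => hinner b)]
      have hsplit : (∑ b : ZMod n, if b = 0 then (0:K)
            else ∑ c : ZMod n, χ c * ζ (b * (c + 1)))
          = ∑ b ∈ Finset.univ.erase (0 : ZMod n), ∑ c : ZMod n, χ c * ζ (b * (c + 1)) := by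
        symm
        rw [show (∑ b ∈ Finset.univ.erase (0:ZMod n), ∑ c : ZMod n, χ c * ζ (b * (c + 1)))
            = ∑ b ∈ Finset.univ.erase (0:ZMod n), (if b = 0 then (0:K)
              else ∑ c : ZMod n, χ c * ζ (b * (c + 1))) from
          Finset.sum_congr rfl (fun b hb => (if_neg (Finset.ne_of_mem_erase hb)).symm)]
        exact Finset.sum_erase Finset.univ (if_pos rfl)
      rw [hsplit, Finset.sum_comm]
      have hc : ∀ c : ZMod n, ∑ b ∈ Finset.univ.erase (0:ZMod n), χ c * ζ (b * (c + 1))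
          = χ c * (-1) + (if c = -1 then χ c * (n : K) else 0) := by
        intro c
        rw [← Finset.mul_sum, hT c, mul_add]
        congr 1
        by_cases hc1 : c = -1 <;> simp [hc1]
      rw [Finset.sum_congr rfl (fun c _ => hc c), Finset.sum_add_distrib,
        ← Finset.sum_mul, χsum, zero_mul, zero_add,
        Finset.sum_ite_eq' Finset.univ (-1 : ZMod n) (fun c => χ c * (n : K)),
        if_pos (Finset.mem_univ _)]
    intro hzero
    rw [hzero, zero_mul] at key
    exact (mul_ne_zero (χne (-1) (neg_ne_zero.2 one_ne_zero)) hnK) key.symm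

open Polynomial

/-- Theorem 3 combined with Lemma 1: for a prime `n ≠ p` and a multiplicative function
`f : {1, …, n-1} → F_q`, the polynomial `F = ∑_{i=1}^{n-1} f(i) X^i` satisfies, for every
differential operator `D` (divisible by `X - 1`) and all `N, M ≥ 1`:
`D^N F ≡ D^M F (mod X^n - 1)` iff `D^N g ≡ D^M g (mod X^n - 1)` for every `g`. -/
theorem stmt13 {F : Type*} [Field F] [Fintype F] (p n : ℕ) [Fact p.Prime] [CharP F p]
    (hn : n.Prime) (hnp : n ≠ p) (f : ℕ → F)
    (hmul : ∀ i j : ℕ, 1 ≤ i → i < n → 1 ≤ j → j < n → f (i * j % n) = f i * f j)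
    (hnz : ∃ i : ℕ, 1 ≤ i ∧ i < n ∧ f i ≠ 0) :
    ∀ D : F[X], (X - 1 : F[X]) ∣ D → ∀ N M : ℕ, 1 ≤ N → 1 ≤ M →
      ((Ideal.Quotient.mk (Ideal.span {(X ^ n - 1 : F[X])}))
          (D ^ N * ∑ i ∈ Finset.Ico 1 n, C (f i) * X ^ i) =
        (Ideal.Quotient.mk (Ideal.span {(X ^ n - 1 : F[X])}))
          (D ^ M * ∑ i ∈ Finset.Ico 1 n, C (f i) * X ^ i) ↔
      ∀ g : F[X],
        (Ideal.Quotient.mk (Ideal.span {(X ^ n - 1 : F[X])})) (D ^ N * g) =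
        (Ideal.Quotient.mk (Ideal.span {(X ^ n - 1 : F[X])})) (D ^ M * g)) := by
  intro D hD N M hN hM
  classical
  haveI : Fact n.Prime := ⟨hn⟩
  set Fp : F[X] := ∑ i ∈ Finset.Ico 1 n, C (f i) * X ^ i with hFp
  set Φ : F[X] := ∑ i ∈ Finset.range n, X ^ i with hΦdef
  have hn1 : 1 < n := hn.one_lt
  have hnF : (n : F) ≠ 0 := by
    intro h
    rw [CharP.cast_eq_zero_iff F p n] at h
    exact hnp ((Nat.prime_dvd_prime_iff_eq Fact.out hn).1 h).symm
  have hfac : Φ * (X - 1) = X ^ n - 1 := geom_sum_mul X n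
  have hΦ1 : Φ.eval 1 = (n : F) := by
    rw [hΦdef, eval_geom_sum]
    simp
  -- coprimality of Φ and Fp
  have hcop : IsCoprime Φ Fp := by
    by_contra hnc
    rw [← EuclideanDomain.gcd_isUnit_iff] at hnc
    set d := EuclideanDomain.gcd Φ Fp with hd
    have hdΦ : d ∣ Φ := EuclideanDomain.gcd_dvd_left _ _
    have hdF : d ∣ Fp := EuclideanDomain.gcd_dvd_right _ _
    have hΦne : Φ ≠ 0 := by
      intro h
      rw [h, eval_zero] at hΦ1
      exact hnF hΦ1.symm
    have hdne : d ≠ 0 := fun h => hΦne (zero_dvd_iff.mp (h ▸ hdΦ))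
    have hdeg : d.degree ≠ 0 := fun h => hnc (isUnit_iff_degree_eq_zero.mpr h)
    set K := AlgebraicClosure F
    set φ : F →+* K := algebraMap F K with hφ
    have hnK : (n : K) ≠ 0 := by
      intro h
      apply hnF
      apply φ.injective
      rw [map_natCast, h, map_zero]
    obtain ⟨β, hβ⟩ := IsAlgClosed.exists_root (d.map φ)
      (by rwa [degree_map])
    obtain ⟨u, hu⟩ := hdΦ
    obtain ⟨v, hv⟩ := hdF
    have hΦβ : (Φ.map φ).eval β = 0 := by
      rw [hu, Polynomial.map_mul, eval_mul, hβ, zero_mul]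
    have hFβ : (Fp.map φ).eval β = 0 := by
      rw [hv, Polynomial.map_mul, eval_mul, hβ, zero_mul]
    have e1 : (Φ.map φ).eval β = ∑ i ∈ Finset.range n, β ^ i := by
      rw [hΦdef]
      simp [Polynomial.map_sum, Polynomial.map_pow]
    have e2 : (Fp.map φ).eval β = ∑ i ∈ Finset.Ico 1 n, φ (f i) * β ^ i := by
      rw [hFp]
      simp [Polynomial.map_sum, Polynomial.map_mul, Polynomial.map_pow, eval_finset_sum]
    have hgeom : ∑ i ∈ Finset.range n, β ^ i = 0 := by rw [← e1, hΦβ]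
    have hβ1 : β ≠ 1 := by
      intro h
      rw [h] at hgeom
      simp at hgeom
      exact hnK (by exact_mod_cast hgeom)
    have hβn : β ^ n = 1 := by
      have := geom_sum_mul β n
      rw [hgeom, zero_mul] at this
      have := this.symm
      rwa [sub_eq_zero] at this
    exact gauss_aux φ n hn hnK f hmul hnz β hβn hβ1 (by rw [← e2, hFβ])
  have hquot : ∀ a b : F[X], (Ideal.Quotient.mk (Ideal.span {(X ^ n - 1 : F[X])})) a =
      (Ideal.Quotient.mk (Ideal.span {(X ^ n - 1 : F[X])})) b ↔
      (X ^ n - 1 : F[X]) ∣ (a - b) := by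
    intro a b
    rw [Ideal.Quotient.eq, Ideal.mem_span_singleton]
  constructor
  · intro h g
    rw [hquot, ← sub_mul] at h ⊢
    have hΦdvd : Φ ∣ (D ^ N - D ^ M) :=
      hcop.dvd_of_dvd_mul_right (dvd_trans ⟨X - 1, hfac.symm⟩ h)
    have hX1 : (X - 1 : F[X]) ∣ (D ^ N - D ^ M) :=
      dvd_sub (hD.trans (dvd_pow_self D (by omega))) (hD.trans (dvd_pow_self D (by omega)))
    have hcop2 : IsCoprime (X - 1 : F[X]) Φ := by
      rw [show (1 : F[X]) = C 1 from (map_one C).symm,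
        (irreducible_X_sub_C (1 : F)).coprime_iff_not_dvd, dvd_iff_isRoot]
      intro hroot
      rw [IsRoot, hΦ1] at hroot
      exact hnF hroot
    have : (X ^ n - 1 : F[X]) ∣ (D ^ N - D ^ M) := by
      rw [← hfac, mul_comm]
      exact hcop2.mul_dvd hX1 hΦdvd
    exact this.mul_right g
  · intro h
    exact h Fp
end

section
/- Let F_q be a finite field of characteristic p, let n be an odd prime different from p with p ∤ k*, where k* is the integer nearest to n/4 (k* = k if n = 4k + 1 and k* = k + 1 if n = 4k + 3). Set F = Σ_{i ∈ NR(n)} X^i, where NR(n) ⊆ {1, …, n−1} is the set of quadratic nonresidues modulo n, regarded in R = F_q[X]/(X^n − 1). Then for every D ∈ F_q[X] divisible by X − 1 and all integers N, M ≥ 1: D^N·F ≡ D^M·F (mod X^n − 1) if and only if D^N·g ≡ D^M·g (mod X^n − 1) for every g ∈ R. -/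
/-!
Write `E = D^N - D^M`, which is divisible by `X - 1`; only `→` needs an argument. For the
nonresidue polynomial `F = ∑_{i ∈ NR(n)} X^i`, we show that `X^n - 1 ∣ E F` forces
`X^n - 1 ∣ E`: indeed `X^n - 1 = (X - 1) Φ` with `Φ = 1 + X + ⋯ + X^(n-1)` coprime to `X - 1`
(as `n ≠ p`) and to `F`. The latter means `η = F(ζ) ≠ 0` at every `n`-th root of unity `ζ ≠ 1`.
With `η'` the companion sum over the nonzero squares, `η η' = ∑_t N(t) ζ^t`, where `N(t)`
counts the ways of writing `t` as nonsquare plus nonzero square. A Jacobi sum computation shows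
that `N` is constant on `t ≠ 0`, so `η η' = N(0) - N(1)`, and `4 (N(0) - N(1)) = 1 - χ₄(n) n`,
i.e. `η η' = -k*` or `k*`, which is nonzero as `p ∤ k*`.
-/

open Polynomial Finset
open scoped Classical

lemma AddChar.sum_mul_sum_eq_sum_card {G R : Type*} [AddCommGroup G] [Fintype G] [DecidableEq G]
    [CommRing R] (ψ : AddChar G R) (A B : Finset G) :
    (∑ a ∈ A, ψ a) * (∑ b ∈ B, ψ b) = ∑ t, (#{b ∈ B | t - b ∈ A} : R) * ψ t := by
  have hshift (b : G) : ∑ a ∈ A, ψ (a + b) = ∑ t, if t - b ∈ A then ψ t else 0 := by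
    rw [← sum_filter]
    exact sum_nbij' (· + b) (· - b) (by simp) (by simp) (by simp) (by simp) (by simp)
  calc (∑ a ∈ A, ψ a) * (∑ b ∈ B, ψ b) = ∑ b ∈ B, ∑ a ∈ A, ψ (a + b) := by
        simp only [mul_sum, sum_mul, AddChar.map_add_eq_mul]
    _ = ∑ t, (#{b ∈ B | t - b ∈ A} : R) * ψ t := by
        simp only [hshift, natCast_card_filter, sum_mul, ite_mul, one_mul, zero_mul]
        exact sum_comm

namespace FiniteField

variable {𝔽 : Type*} [Field 𝔽] [Fintype 𝔽] [DecidableEq 𝔽]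

noncomputable def nonsquareAddSquareCount (t : 𝔽) : ℕ :=
  #{b | (IsSquare b ∧ b ≠ 0) ∧ ¬ IsSquare (t - b)}

lemma two_mul_ite_isSquare_and_ne_zero (b : 𝔽) :
    2 * (if IsSquare b ∧ b ≠ 0 then 1 else 0 : ℤ) =
      1 + quadraticChar 𝔽 b - if b = 0 then 1 else 0 := by
  by_cases hb : b = 0
  · simp [hb]
  by_cases hsq : IsSquare b
  · simp [hb, hsq, (quadraticChar_one_iff_isSquare hb).2 hsq]
  · simp [hb, hsq, quadraticChar_neg_one_iff_not_isSquare.2 hsq]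

lemma two_mul_ite_not_isSquare (b : 𝔽) :
    2 * (if ¬ IsSquare b then 1 else 0 : ℤ) =
      1 - quadraticChar 𝔽 b - if b = 0 then 1 else 0 := by
  by_cases hb : b = 0
  · simp [hb]
  by_cases hsq : IsSquare b
  · simp [hb, hsq, (quadraticChar_one_iff_isSquare hb).2 hsq]
  · simp [hb, hsq, quadraticChar_neg_one_iff_not_isSquare.2 hsq]

lemma four_mul_nonsquareAddSquareCount (hF : ringChar 𝔽 ≠ 2) (t : 𝔽) :
    4 * (nonsquareAddSquareCount t : ℤ) = Fintype.card 𝔽 - 2 + (if t = 0 then 1 else 0)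
      - ∑ b, quadraticChar 𝔽 b * quadraticChar 𝔽 (t - b) := by
  have hsum : ∑ b : 𝔽, quadraticChar 𝔽 b = 0 := quadraticChar_sum_zero hF
  have hsum' : ∑ b : 𝔽, quadraticChar 𝔽 (t - b) = 0 := by
    rw [← hsum]; exact Fintype.sum_equiv (Equiv.subLeft t) _ _ fun _ => rfl
  have hind : (nonsquareAddSquareCount t : ℤ) = ∑ b : 𝔽,
      (if IsSquare b ∧ b ≠ 0 then 1 else 0 : ℤ) * (if ¬ IsSquare (t - b) then 1 else 0) := by
    simp only [nonsquareAddSquareCount, natCast_card_filter, ite_zero_mul_ite_zero, mul_one]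
  rw [hind, mul_sum]
  simp only [show ∀ x y : ℤ, 4 * (x * y) = (2 * x) * (2 * y) from fun _ _ => by ring,
    two_mul_ite_isSquare_and_ne_zero, two_mul_ite_not_isSquare]
  simp only [mul_sub, mul_one, sub_mul, add_mul, one_mul, ite_mul, zero_mul, mul_ite, mul_zero,
    sum_sub_distrib, sum_add_distrib, sum_const, card_univ, Int.nsmul_eq_mul, hsum, hsum', add_zero,
    sum_ite_eq', sum_ite_eq, mem_univ, ↓reduceIte, zero_add, sub_zero, sub_eq_zero, eq_comm]
  ring

lemma sum_quadraticChar_mul_sub (hF : ringChar 𝔽 ≠ 2) {t : 𝔽} (ht : t ≠ 0) :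
    ∑ b, quadraticChar 𝔽 b * quadraticChar 𝔽 (t - b) = -quadraticChar 𝔽 (-1) := by
  set χ := quadraticChar 𝔽
  have hχt : χ t * χ t = 1 := by rw [← sq]; exact quadraticChar_sq_one ht
  calc ∑ b, χ b * χ (t - b) = ∑ x, χ (t * x) * χ (t - t * x) :=
        (Fintype.sum_equiv (Equiv.mulLeft₀ t ht) _ _ fun _ => rfl).symm
    _ = ∑ x, χ x * χ (1 - x) := by
        refine Fintype.sum_congr _ _ fun x => ?_
        rw [← mul_one_sub, map_mul, map_mul, mul_mul_mul_comm, hχt, one_mul]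
    _ = jacobiSum χ χ⁻¹ := by rw [(quadraticChar_isQuadratic 𝔽).inv]; rfl
    _ = -χ (-1) := jacobiSum_nontrivial_inv (quadraticChar_ne_one hF)

lemma sum_quadraticChar_mul_zero_sub :
    ∑ b, quadraticChar 𝔽 b * quadraticChar 𝔽 (0 - b) =
      quadraticChar 𝔽 (-1) * (Fintype.card 𝔽 - 1) := by
  have hsq (b : 𝔽) : quadraticChar 𝔽 b * quadraticChar 𝔽 (0 - b) =
      quadraticChar 𝔽 (-1) * (1 - if b = 0 then 1 else 0) := by
    by_cases hb : b = 0
    · simp [hb]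
    · rw [zero_sub, neg_eq_neg_one_mul, map_mul, mul_left_comm, ← sq, quadraticChar_sq_one hb]
      simp [hb]
  rw [Fintype.sum_congr _ _ hsq, ← mul_sum, sum_sub_distrib]
  simp

lemma four_mul_nonsquareAddSquareCount_zero_sub_one (hF : ringChar 𝔽 ≠ 2) :
    4 * ((nonsquareAddSquareCount (0 : 𝔽) : ℤ) - nonsquareAddSquareCount (1 : 𝔽)) =
      1 - ZMod.χ₄ (Fintype.card 𝔽) * Fintype.card 𝔽 := by
  rw [← quadraticChar_neg_one hF, mul_sub, four_mul_nonsquareAddSquareCount hF,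
    four_mul_nonsquareAddSquareCount hF (1 : 𝔽), sum_quadraticChar_mul_zero_sub,
    sum_quadraticChar_mul_sub hF one_ne_zero, if_pos rfl, if_neg one_ne_zero]
  ring

lemma nonsquareAddSquareCount_eq_one_of_ne_zero (hF : ringChar 𝔽 ≠ 2) {t : 𝔽}
    (ht : t ≠ 0) :
    nonsquareAddSquareCount t = nonsquareAddSquareCount (1 : 𝔽) := by
  have h := four_mul_nonsquareAddSquareCount hF t
  have h1 := four_mul_nonsquareAddSquareCount hF (1 : 𝔽)
  rw [sum_quadraticChar_mul_sub hF ht, if_neg ht] at h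
  rw [sum_quadraticChar_mul_sub hF one_ne_zero, if_neg one_ne_zero] at h1
  omega

lemma sum_nonsquare_mul_sum_square {R : Type*} [CommRing R] [IsDomain R] (hF : ringChar 𝔽 ≠ 2)
    {ψ : AddChar 𝔽 R} (hψ : ψ ≠ 1) :
    (∑ a with ¬ IsSquare a, ψ a) * (∑ b with IsSquare b ∧ b ≠ 0, ψ b) =
      ((nonsquareAddSquareCount (0 : 𝔽) - nonsquareAddSquareCount (1 : 𝔽) : ℤ) : R) := by
  set N := @nonsquareAddSquareCount 𝔽 _ _ _
  have hcard (t : 𝔽) : #{b ∈ ({b | IsSquare b ∧ b ≠ 0} : Finset 𝔽) |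
      t - b ∈ ({a | ¬ IsSquare a} : Finset 𝔽)} = N t := by
    simp [N, nonsquareAddSquareCount, filter_filter]
  rw [AddChar.sum_mul_sum_eq_sum_card]
  simp only [hcard]
  calc ∑ t, (N t : R) * ψ t = ∑ t, ((N t : R) - N 1) * ψ t + N 1 * ∑ t, ψ t := by
        rw [mul_sum, ← sum_add_distrib]
        exact sum_congr rfl fun _ _ => by ring
    _ = ((N 0 : R) - N 1) * ψ 0 := by
        rw [AddChar.sum_eq_zero_of_ne_one hψ, mul_zero, add_zero]
        refine sum_eq_single 0 (fun t _ ht => ?_) (by simp)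
        rw [show N t = N 1 from nonsquareAddSquareCount_eq_one_of_ne_zero hF ht, sub_self, zero_mul]
    _ = _ := by simp

end FiniteField

lemma sum_pow_filter_not_isSquare_eq_sum_zmodChar {L : Type*} [Field L] {n : ℕ} [NeZero n]
    [DecidablePred fun i : ℕ => ¬ IsSquare (i : ZMod n)] {ζ : L} (hζ : ζ ^ n = 1) :
    ∑ i ∈ (Ico 1 n).filter (fun i : ℕ => ¬ IsSquare (i : ZMod n)), ζ ^ i =
      ∑ a : ZMod n with ¬ IsSquare a, AddChar.zmodChar n hζ a := by
  refine sum_nbij' (fun i => (i : ZMod n)) ZMod.val ?_ ?_ ?_ ?_ ?_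
  · intro i hi
    simp_all
  · intro a ha
    have ha0 : a ≠ 0 := by rintro rfl; simp at ha
    simp_all [Nat.one_le_iff_ne_zero, ZMod.val_lt]
  · intro i hi
    exact ZMod.val_cast_of_lt (mem_Ico.1 (mem_filter.1 hi).1).2
  · intro a _
    exact ZMod.natCast_zmod_val a
  · intro i _
    rw [AddChar.zmodChar_apply']

lemma sum_pow_filter_not_isSquare_ne_zero {L : Type*} [Field L] (p n k : ℕ) [CharP L p]
    [DecidablePred fun i : ℕ => ¬ IsSquare (i : ZMod n)] (hn : n.Prime) (hn2 : n ≠ 2)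
    (hk : (n % 4 = 1 ∧ k = n / 4) ∨ (n % 4 = 3 ∧ k = n / 4 + 1)) (hpk : ¬ p ∣ k)
    {ζ : L} (hζ : ζ ^ n = 1) (hζ1 : ζ ≠ 1) :
    ∑ i ∈ (Ico 1 n).filter (fun i : ℕ => ¬ IsSquare (i : ZMod n)), ζ ^ i ≠ 0 := by
  have : Fact n.Prime := ⟨hn⟩
  have hF : ringChar (ZMod n) ≠ 2 := by rwa [ZMod.ringChar_zmod_n]
  have hψ : AddChar.zmodChar n hζ ≠ 1 :=
    AddChar.ne_one_iff.2 ⟨1, by rwa [← Nat.cast_one, AddChar.zmodChar_apply', pow_one]⟩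
  have hprod := FiniteField.sum_nonsquare_mul_sum_square hF hψ
  have hc := FiniteField.four_mul_nonsquareAddSquareCount_zero_sub_one hF
  rw [ZMod.card] at hc
  set c : ℤ := (FiniteField.nonsquareAddSquareCount (0 : ZMod n) : ℤ) -
    FiniteField.nonsquareAddSquareCount (1 : ZMod n)
  have hck : c = -k ∨ c = k := by
    rcases hk with ⟨h4, rfl⟩ | ⟨h4, rfl⟩
    · rw [ZMod.χ₄_nat_one_mod_four h4] at hc; omega
    · rw [ZMod.χ₄_nat_three_mod_four h4] at hc; omega
  rw [sum_pow_filter_not_isSquare_eq_sum_zmodChar hζ]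
  intro h0
  rw [h0, zero_mul, eq_comm, CharP.intCast_eq_zero_iff L p] at hprod
  apply hpk
  rcases hck with hck | hck <;> rw [hck] at hprod <;>
    exact Int.natCast_dvd_natCast.1 (by simpa using hprod)

lemma X_pow_sub_one_dvd_of_dvd_mul {K : Type*} [Field K] {n : ℕ} (hn : (n : K) ≠ 0) {E G : K[X]}
    (hG : ∀ ζ : AlgebraicClosure K, ζ ^ n = 1 → ζ ≠ 1 → aeval ζ G ≠ 0)
    (hE : X - 1 ∣ E) (h : X ^ n - 1 ∣ E * G) : X ^ n - 1 ∣ E := by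
  set C : K[X] := ∑ i ∈ range n, X ^ i
  have hC : C * (X - 1) = X ^ n - 1 := geom_sum_mul X n
  have hn' : (n : AlgebraicClosure K) ≠ 0 := by
    rwa [← map_natCast (algebraMap K (AlgebraicClosure K)), _root_.map_ne_zero]
  have hroot (ζ : AlgebraicClosure K) (hζ : aeval ζ C = 0) : ζ ^ n = 1 ∧ ζ ≠ 1 := by
    have h1 := congrArg (aeval ζ) hC
    simp only [map_mul, hζ, zero_mul, map_sub, map_pow, aeval_X, map_one] at h1
    refine ⟨sub_eq_zero.1 h1.symm, fun hζ1 => hn' ?_⟩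
    simpa [C, hζ1] using hζ
  have hCG : IsCoprime C G := by
    refine (isCoprime_iff_aeval_ne_zero_of_isAlgClosed K (AlgebraicClosure K) C G).2 fun ζ => ?_
    by_cases hζ : aeval ζ C = 0
    · exact .inr (hG ζ (hroot ζ hζ).1 (hroot ζ hζ).2)
    · exact .inl hζ
  have hCX : IsCoprime C (X - 1) := by
    refine (isCoprime_iff_aeval_ne_zero_of_isAlgClosed K (AlgebraicClosure K) C _).2 fun ζ => ?_
    by_cases hζ : aeval ζ C = 0
    · exact .inr (by simpa [sub_eq_zero] using (hroot ζ hζ).2)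
    · exact .inl hζ
  rw [← hC]
  exact hCX.mul_dvd (hCG.dvd_of_dvd_mul_right (dvd_trans (Dvd.intro _ hC) h)) hE

theorem stmt16_general {F : Type*} [Field F] (p n k : ℕ) [CharP F p]
    (hn : n.Prime) (hn2 : n ≠ 2) (hnp : n ≠ p)
    (hk : (n % 4 = 1 ∧ k = n / 4) ∨ (n % 4 = 3 ∧ k = n / 4 + 1))
    (hpk : ¬ p ∣ k) :
    ∀ D : F[X], (X - 1 : F[X]) ∣ D → ∀ N M : ℕ, 1 ≤ N → 1 ≤ M →
      ((Ideal.Quotient.mk (Ideal.span {(X ^ n - 1 : F[X])}))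
          (D ^ N * ∑ i ∈ (Finset.Ico 1 n).filter
            (fun i : ℕ => ¬ IsSquare ((i : ZMod n))), X ^ i) =
        (Ideal.Quotient.mk (Ideal.span {(X ^ n - 1 : F[X])}))
          (D ^ M * ∑ i ∈ (Finset.Ico 1 n).filter
            (fun i : ℕ => ¬ IsSquare ((i : ZMod n))), X ^ i) ↔
      ∀ g : F[X],
        (Ideal.Quotient.mk (Ideal.span {(X ^ n - 1 : F[X])})) (D ^ N * g) =
        (Ideal.Quotient.mk (Ideal.span {(X ^ n - 1 : F[X])})) (D ^ M * g)) := by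
  intro D hD N M hN hM
  simp only [Ideal.Quotient.eq, Ideal.mem_span_singleton, ← sub_mul]
  have hnF : (n : F) ≠ 0 := by
    rw [Ne, CharP.cast_eq_zero_iff F p]
    intro hpn
    rcases hn.eq_one_or_self_of_dvd p hpn with rfl | rfl
    exacts [CharP.char_ne_one F 1 rfl, hnp rfl]
  have hE : X - 1 ∣ D ^ N - D ^ M := dvd_sub (dvd_pow hD (by omega)) (dvd_pow hD (by omega))
  refine ⟨fun h g => (X_pow_sub_one_dvd_of_dvd_mul hnF (fun ζ hζ hζ1 => ?_) hE h).mul_right g,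
    fun h => h _⟩
  simpa using sum_pow_filter_not_isSquare_ne_zero p n k hn hn2 hk hpk hζ hζ1

/-- Theorem 2 combined with Lemma 1: for an odd prime `n ≠ p` with `p ∤ k*` (`k*` the
integer nearest to `n/4`), the quadratic-nonresidue indicator polynomial
`F = ∑_{i ∈ NR(n)} X^i` satisfies, for every differential operator `D` (divisible by
`X - 1`) and all `N, M ≥ 1`: `D^N F ≡ D^M F (mod X^n - 1)` iff
`D^N g ≡ D^M g (mod X^n - 1)` for every `g`. -/
theorem stmt16 {F : Type*} [Field F] [Fintype F] (p n k : ℕ) [Fact p.Prime] [CharP F p]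
    (hn : n.Prime) (hn2 : n ≠ 2) (hnp : n ≠ p)
    (hk : (n % 4 = 1 ∧ k = n / 4) ∨ (n % 4 = 3 ∧ k = n / 4 + 1))
    (hpk : ¬ p ∣ k) :
    ∀ D : F[X], (X - 1 : F[X]) ∣ D → ∀ N M : ℕ, 1 ≤ N → 1 ≤ M →
      ((Ideal.Quotient.mk (Ideal.span {(X ^ n - 1 : F[X])}))
          (D ^ N * ∑ i ∈ (Finset.Ico 1 n).filter
            (fun i : ℕ => ¬ IsSquare ((i : ZMod n))), X ^ i) =
        (Ideal.Quotient.mk (Ideal.span {(X ^ n - 1 : F[X])}))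
          (D ^ M * ∑ i ∈ (Finset.Ico 1 n).filter
            (fun i : ℕ => ¬ IsSquare ((i : ZMod n))), X ^ i) ↔
      ∀ g : F[X],
        (Ideal.Quotient.mk (Ideal.span {(X ^ n - 1 : F[X])})) (D ^ N * g) =
        (Ideal.Quotient.mk (Ideal.span {(X ^ n - 1 : F[X])})) (D ^ M * g)) :=
  stmt16_general p n k hn hn2 hnp hk hpk
end
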